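/- arXiv:1702.03255 — 4 statements merged into one kernel-verified Lean document; each statement's English description precedes it below -/
import Mathlib

section
/- For σ, τ ∈ Σ_{n+1}, the segment with endpoints σ·v and τ·v is an edge (1-dimensional face) of P_n if and only if σ⁻¹τ is a transposition of two consecutive integers, i.e. σ⁻¹τ = (a, a+1) for some 1 ≤ a ≤ n. Consequently the 1-skeleton of the permutohedron P_n is the Cayley graph of Σ_{n+1} with respect to the generating set of adjacent transpositions. -/
noncomputable section

/-- The symmetric group `Σ_{n+1}` acts on `ℝ^{n+1}` by permuting coordinates:
`(σ·x)_i = x_{σ⁻¹(i)}`. -/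
def permAct (n : ℕ) (σ : Equiv.Perm (Fin (n + 1))) (x : Fin (n + 1) → ℝ) :
    Fin (n + 1) → ℝ :=
  fun i => x (σ⁻¹ i)

/-- The point `v = (1, 2, …, n+1) ∈ ℝ^{n+1}`. -/
def basePt (n : ℕ) : Fin (n + 1) → ℝ := fun i => (i : ℕ) + 1

/-- The `n`-permutohedron `P_n = conv {σ·v : σ ∈ Σ_{n+1}}`. -/
def permutohedron (n : ℕ) : Set (Fin (n + 1) → ℝ) :=
  convexHull ℝ {x | ∃ σ : Equiv.Perm (Fin (n + 1)), x = permAct n σ (basePt n)}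

/-- `F` is a face of `Q`: the set of points of `Q` where some linear functional `ℓ`
attains its maximum over `Q`. -/
def IsFace {E : Type*} [AddCommGroup E] [Module ℝ E] (Q F : Set E) : Prop :=
  ∃ ℓ : E →ₗ[ℝ] ℝ, F = {x ∈ Q | ∀ y ∈ Q, ℓ y ≤ ℓ x}

/-- The dimension of a face: the dimension of its affine span. -/
def faceDim {E : Type*} [AddCommGroup E] [Module ℝ E] (F : Set E) : ℕ :=
  Module.finrank ℝ (affineSpan ℝ F).direction

/-- A vertex of `Q` is a point lying in a 0-dimensional face of `Q`. -/
def IsVertex {E : Type*} [AddCommGroup E] [Module ℝ E] (Q : Set E) (x : E) : Prop :=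
  ∃ F : Set E, IsFace Q F ∧ faceDim F = 0 ∧ x ∈ F

namespace PermAux

open Finset

variable {n : ℕ}

lemma basePt_strictMono : StrictMono (basePt n) := fun i j h => by
  have : (i : ℕ) < j := h
  have : ((i : ℕ) : ℝ) < ((j : ℕ) : ℝ) := by exact_mod_cast this
  simpa [basePt] using this

lemma basePt_injective : Function.Injective (basePt n) := basePt_strictMono.injective

lemma permAct_inj {σ τ : Equiv.Perm (Fin (n + 1))}
    (h : permAct n σ (basePt n) = permAct n τ (basePt n)) : σ = τ := by
  have h1 : σ⁻¹ = τ⁻¹ := Equiv.ext fun i => basePt_injective (congrFun h i)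
  simpa using congrArg Inv.inv h1

lemma vertex_mem (ρ : Equiv.Perm (Fin (n + 1))) :
    permAct n ρ (basePt n) ∈ permutohedron n :=
  subset_convexHull ℝ _ ⟨ρ, rfl⟩

lemma sum_sq_perm (ρ : Equiv.Perm (Fin (n + 1))) :
    ∑ i, (permAct n ρ (basePt n) i) ^ 2 = ∑ i, (basePt n i) ^ 2 := by
  simpa [permAct] using Equiv.sum_comp ρ⁻¹ (fun i => (basePt n i) ^ 2)

/-- All points of a segment between two points on a sphere which also lie on the sphere
are endpoints. -/
lemma segment_vertex {N : ℕ} (x y z : Fin N → ℝ)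
    (hx : ∑ i, (x i) ^ 2 = ∑ i, (y i) ^ 2) (hz : ∑ i, (z i) ^ 2 = ∑ i, (y i) ^ 2)
    (hmem : z ∈ segment ℝ x y) : z = x ∨ z = y := by
  obtain ⟨a, b, ha, hb, hab, rfl⟩ := hmem
  by_cases ha0 : a = 0
  · right; subst ha0
    have hb1 : b = 1 := by linarith
    subst hb1; funext i; simp
  by_cases hb0 : b = 0
  · left; subst hb0
    have ha1 : a = 1 := by linarith
    subst ha1; funext i; simp
  have hb' : b = 1 - a := by linarith
  subst hb'
  have hexp : ∑ i, ((a • x + (1 - a) • y) i) ^ 2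
      = a ^ 2 * ∑ i, (x i) ^ 2 + (2 * a * (1 - a)) * ∑ i, x i * y i
        + (1 - a) ^ 2 * ∑ i, (y i) ^ 2 := by
    simp only [Pi.add_apply, Pi.smul_apply, smul_eq_mul, mul_sum]
    rw [← sum_add_distrib, ← sum_add_distrib]
    exact Finset.sum_congr rfl fun i _ => by ring
  have hD' : ∑ i, (x i - y i) ^ 2
      = ∑ i, (x i) ^ 2 + ∑ i, (y i) ^ 2 - 2 * ∑ i, x i * y i := by
    rw [mul_sum, ← sum_add_distrib, ← sum_sub_distrib]
    exact Finset.sum_congr rfl fun i _ => by ring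
  have h1 : a ^ 2 * ∑ i, (x i) ^ 2 + (2 * a * (1 - a)) * ∑ i, x i * y i
      + (1 - a) ^ 2 * ∑ i, (y i) ^ 2 = ∑ i, (y i) ^ 2 := by rw [← hexp, hz]
  have hkey : a * (1 - a) * ∑ i, (x i - y i) ^ 2 = 0 := by
    linear_combination a * (1 - a) * hD' + (a * (1 - a) + a ^ 2) * hx - h1
  have hapos : 0 < a := lt_of_le_of_ne ha (Ne.symm ha0)
  have hbpos : 0 < 1 - a := lt_of_le_of_ne hb (Ne.symm hb0)
  have hD0 : ∑ i, (x i - y i) ^ 2 = 0 := by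
    rcases mul_eq_zero.1 hkey with h | h
    · exact absurd h (mul_pos hapos hbpos).ne'
    · exact h
  have hxy : x = y := by
    funext i
    have h5 := (Finset.sum_eq_zero_iff_of_nonneg (fun i _ => sq_nonneg (x i - y i))).1 hD0 i
      (mem_univ i)
    have h6 := pow_eq_zero_iff (n := 2) (by norm_num) |>.1 h5
    linarith [h6]
  left
  subst hxy
  funext i
  simp only [Pi.add_apply, Pi.smul_apply, smul_eq_mul]
  ring

lemma monovary_basePt {c : Fin (n + 1) → ℝ} (hc : Monotone c) : Monovary c (basePt n) :=
  fun _ _ h => hc (basePt_strictMono.lt_iff_lt.1 h).le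

lemma key_le {c : Fin (n + 1) → ℝ} (hc : Monotone c) (π : Equiv.Perm (Fin (n + 1))) :
    ∑ i, c (π i) * basePt n i ≤ ∑ i, c i * basePt n i := by
  simpa [smul_eq_mul] using (monovary_basePt hc).sum_comp_perm_smul_le_sum_smul (σ := π)

lemma key_eq_iff {c : Fin (n + 1) → ℝ} (hc : Monotone c) (π : Equiv.Perm (Fin (n + 1))) :
    ∑ i, c (π i) * basePt n i = ∑ i, c i * basePt n i ↔ c ∘ π = c := by
  constructor
  · intro h
    have h2 : Monovary (c ∘ π) (basePt n) := by
      rw [← (monovary_basePt hc).sum_comp_perm_smul_eq_sum_smul_iff (σ := π)]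
      simpa [smul_eq_mul] using h
    have h3 : Monotone (c ∘ π) := monotone_iff_forall_lt.2 fun i j hij =>
      h2 (basePt_strictMono hij)
    have h4 := Tuple.unique_monotone (f := c) (σ := π) (τ := Equiv.refl _) h3 (by simpa using hc)
    simpa using h4
  · intro h
    exact Finset.sum_congr rfl fun i _ => by rw [show c (π i) = (c ∘ π) i from rfl, h]

lemma sum_swap_mul {N : ℕ} (f g : Fin N → ℝ) {i j : Fin N} (hij : i ≠ j) :
    ∑ k, f (Equiv.swap i j k) * g k
      = (∑ k, f k * g k) + (f j - f i) * g i + (f i - f j) * g j := by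
  have h1 : ∑ k, (f (Equiv.swap i j k) - f k) * g k
      = ∑ k ∈ ({i, j} : Finset (Fin N)), (f (Equiv.swap i j k) - f k) * g k := by
    refine (Finset.sum_subset (Finset.subset_univ _) fun k _ hk => ?_).symm
    simp only [Finset.mem_insert, Finset.mem_singleton, not_or] at hk
    rw [Equiv.swap_apply_of_ne_of_ne hk.1 hk.2]; ring
  rw [Finset.sum_pair hij, Equiv.swap_apply_left, Equiv.swap_apply_right] at h1
  have h2 : ∑ k, f (Equiv.swap i j k) * g k
      = (∑ k, f k * g k) + ∑ k, (f (Equiv.swap i j k) - f k) * g k := by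
    rw [← sum_add_distrib]
    exact Finset.sum_congr rfl fun k _ => by ring
  rw [h2, h1]; ring

/-- The weight function that collapses positions `a` and `a+1`. -/
def cA (a : Fin n) : Fin (n + 1) → ℝ :=
  fun i => if i = a.succ then ((a : ℕ) : ℝ) else ((i : ℕ) : ℝ)

lemma cA_monotone (a : Fin n) : Monotone (cA a) := by
  intro i j hij
  unfold cA
  by_cases hi : i = a.succ <;> by_cases hj : j = a.succ <;> simp [hi, hj]
  · subst hi
    have h1 : (a : ℕ) + 1 ≤ (j : ℕ) := by
      simpa [Fin.le_def, Fin.val_succ] using hij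
    exact_mod_cast h1.trans' (Nat.le_succ _)
  · subst hj
    have h1 : (i : ℕ) ≤ (a : ℕ) + 1 := by simpa [Fin.le_def, Fin.val_succ] using hij
    have h2 : (i : ℕ) ≠ (a : ℕ) + 1 := fun h => hi (Fin.ext (by simpa [Fin.val_succ] using h))
    have : (i : ℕ) ≤ (a : ℕ) := by omega
    exact_mod_cast this
  · exact_mod_cast (Fin.le_def.1 hij)

lemma castSucc_ne_succ (a : Fin n) : (a.castSucc : Fin (n + 1)) ≠ a.succ :=
  (Fin.castSucc_lt_succ (i := a)).ne

lemma cA_castSucc (a : Fin n) : cA a a.castSucc = ((a : ℕ) : ℝ) := by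
  simp [cA, castSucc_ne_succ a]

lemma cA_succ (a : Fin n) : cA a a.succ = ((a : ℕ) : ℝ) := by simp [cA]

lemma cA_inj (a : Fin n) {i j : Fin (n + 1)} (h : cA a i = cA a j) :
    i = j ∨ (i = a.castSucc ∧ j = a.succ) ∨ (i = a.succ ∧ j = a.castSucc) := by
  unfold cA at h
  by_cases hi : i = a.succ <;> by_cases hj : j = a.succ <;> simp [hi, hj] at h
  · left; rw [hi, hj]
  · right; right
    refine ⟨hi, Fin.ext ?_⟩
    have : (a : ℕ) = (j : ℕ) := by exact_mod_cast h
    simp [this.symm]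
  · right; left
    refine ⟨Fin.ext ?_, hj⟩
    have : (i : ℕ) = (a : ℕ) := by exact_mod_cast h
    simp [this]
  · left
    exact Fin.ext (by exact_mod_cast h)

lemma cA_comp_swap (a : Fin n) :
    cA a ∘ (Equiv.swap a.castSucc a.succ) = cA a := by
  funext k
  rcases eq_or_ne k a.castSucc with rfl | hk1
  · simp [Equiv.swap_apply_left, cA_castSucc, cA_succ]
  rcases eq_or_ne k a.succ with rfl | hk2
  · simp [Equiv.swap_apply_right, cA_castSucc, cA_succ]
  · simp [Function.comp, Equiv.swap_apply_of_ne_of_ne hk1 hk2]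

lemma cA_perm_eq {a : Fin n} {π : Equiv.Perm (Fin (n + 1))} (h : cA a ∘ π = cA a) :
    π = 1 ∨ π = Equiv.swap a.castSucc a.succ := by
  have hpt : ∀ k, cA a (π k) = cA a k := fun k => congrFun h k
  have hfix : ∀ k, k ≠ a.castSucc → k ≠ a.succ → π k = k := by
    intro k h1 h2
    rcases cA_inj a (hpt k) with h' | ⟨h3, h4⟩ | ⟨h3, h4⟩
    · exact h'
    · exact absurd h4 h2
    · exact absurd h4 h1
  have hc : π a.castSucc = a.castSucc ∨ π a.castSucc = a.succ := by
    by_contra hcon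
    push_neg at hcon
    have h5 := hfix (π a.castSucc) hcon.1 hcon.2
    exact hcon.1 (π.injective h5)
  have hs : π a.succ = a.castSucc ∨ π a.succ = a.succ := by
    by_contra hcon
    push_neg at hcon
    have h5 := hfix (π a.succ) hcon.1 hcon.2
    exact hcon.2 (π.injective h5)
  rcases hc with h1 | h1
  · left
    have h2 : π a.succ = a.succ := by
      rcases hs with h2 | h2
      · exact absurd (π.injective (h1.trans h2.symm)) (castSucc_ne_succ a)
      · exact h2
    refine Equiv.ext fun k => ?_
    simp only [Equiv.Perm.one_apply]
    rcases eq_or_ne k a.castSucc with rfl | hk1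
    · exact h1
    rcases eq_or_ne k a.succ with rfl | hk2
    · exact h2
    · exact hfix k hk1 hk2
  · right
    have h2 : π a.succ = a.castSucc := by
      rcases hs with h2 | h2
      · exact h2
      · exact absurd (π.injective (h1.trans h2.symm)) (castSucc_ne_succ a)
    refine Equiv.ext fun k => ?_
    rcases eq_or_ne k a.castSucc with rfl | hk1
    · rw [Equiv.swap_apply_left]; exact h1
    rcases eq_or_ne k a.succ with rfl | hk2
    · rw [Equiv.swap_apply_right]; exact h2
    · rw [Equiv.swap_apply_of_ne_of_ne hk1 hk2]; exact hfix k hk1 hk2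

/-- Evaluating a coordinate-weighted sum at a permuted base point. -/
lemma sum_perm_pt (d : Fin (n + 1) → ℝ) (ρ : Equiv.Perm (Fin (n + 1))) :
    ∑ j, d j * permAct n ρ (basePt n) j = ∑ j, d (ρ j) * basePt n j := by
  have h := Equiv.sum_comp ρ (fun j => d j * basePt n (ρ⁻¹ j))
  simp only [Equiv.Perm.inv_def, Equiv.symm_apply_apply] at h
  simpa [permAct] using h.symm

/-- A convex combination of points each of which is `p` or `q` lies on `[p,q]`. -/
lemma mem_seg_of_comb {ι : Type} [Fintype ι] {E : Type*} [AddCommGroup E] [Module ℝ E]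
    (wt : ι → ℝ) (z : ι → E) (p q : E) (h0 : ∀ i, 0 ≤ wt i) (h1 : ∑ i, wt i = 1)
    (hz : ∀ i, wt i = 0 ∨ z i = p ∨ z i = q) :
    ∑ i, wt i • z i ∈ segment ℝ p q := by
  classical
  set A : Finset ι := univ.filter fun i => z i = p with hA
  refine ⟨∑ i ∈ A, wt i, ∑ i ∈ Aᶜ, wt i, sum_nonneg fun i _ => h0 i,
    sum_nonneg fun i _ => h0 i, by rw [sum_add_sum_compl]; exact h1, ?_⟩
  rw [sum_smul, sum_smul]
  have hp : ∀ i ∈ A, wt i • p = wt i • z i := by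
    intro i hi
    rw [(mem_filter.1 hi).2]
  have hq : ∀ i ∈ Aᶜ, wt i • q = wt i • z i := by
    intro i hi
    have hi' : ¬ z i = p := by simpa [hA] using (mem_compl.1 hi)
    rcases hz i with h | h | h
    · rw [h, zero_smul, zero_smul]
    · exact absurd h hi'
    · rw [h]
  rw [Finset.sum_congr rfl hp, Finset.sum_congr rfl hq, sum_add_sum_compl]

/-- If a monotone function is preserved by a nontrivial permutation, it takes equal values at
some pair of adjacent indices. -/
lemma exists_const_pair {π : Equiv.Perm (Fin (n + 1))} (hπ : π ≠ 1) {c : Fin (n + 1) → ℝ}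
    (hmono : Monotone c) (hcc : c ∘ π = c) : ∃ b : Fin n, c b.succ = c b.castSucc := by
  classical
  have hsne : (univ.filter fun i => π i ≠ i).Nonempty := by
    by_contra h
    rw [not_nonempty_iff_eq_empty, filter_eq_empty_iff] at h
    exact hπ (Equiv.ext fun i => by simpa using h (mem_univ i))
  set a : Fin (n + 1) := (univ.filter fun i => π i ≠ i).min' hsne with hadef
  have hamem : π a ≠ a := (mem_filter.1 (Finset.min'_mem _ hsne)).2
  have halt : a < π a := by
    have hmoved : π (π a) ≠ π a := fun h => hamem (π.injective h)
    have hle : a ≤ π a :=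
      Finset.min'_le (univ.filter fun i => π i ≠ i) (π a) (mem_filter.2 ⟨mem_univ _, hmoved⟩)
    exact lt_of_le_of_ne hle (Ne.symm hamem)
  have h1n : (a : ℕ) < n := by
    have h2 : ((π a : Fin (n + 1)) : ℕ) < n + 1 := (π a).isLt
    have h3 : (a : ℕ) < ((π a : Fin (n + 1)) : ℕ) := halt
    omega
  refine ⟨⟨(a : ℕ), h1n⟩, ?_⟩
  have hb0 : (Fin.castSucc ⟨(a : ℕ), h1n⟩ : Fin (n + 1)) = a := Fin.ext rfl
  have hle1 : c (Fin.castSucc ⟨(a : ℕ), h1n⟩) ≤ c (Fin.succ ⟨(a : ℕ), h1n⟩) :=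
    hmono (Fin.castSucc_lt_succ).le
  have hle2 : c (Fin.succ ⟨(a : ℕ), h1n⟩) ≤ c (π a) := by
    apply hmono
    rw [Fin.le_def, Fin.val_succ]
    exact halt
  have hfa : c (π a) = c a := congrFun hcc a
  rw [hfa] at hle2
  rw [hb0] at hle1 ⊢
  exact le_antisymm hle2 hle1

end PermAux

open PermAux Finset

/-- The segment `[σ·v, τ·v]` is an edge (1-dimensional face) of `P_n`
iff `σ⁻¹τ` is a transposition of two consecutive integers; consequently the 1-skeleton
of `P_n` is the Cayley graph of `Σ_{n+1}` on the adjacent transpositions. -/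
theorem statement1 (n : ℕ) (hn : 1 ≤ n) (σ τ : Equiv.Perm (Fin (n + 1))) :
    (IsFace (permutohedron n) (segment ℝ (permAct n σ (basePt n)) (permAct n τ (basePt n))) ∧
        faceDim (segment ℝ (permAct n σ (basePt n)) (permAct n τ (basePt n))) = 1) ↔
    ∃ a : Fin n, σ⁻¹ * τ = Equiv.swap (a.castSucc) (a.succ) := by
  constructor
  · rintro ⟨⟨ℓ, hF⟩, hdim⟩
    by_contra hcon
    -- the endpoints are distinct
    have hne : permAct n σ (basePt n) ≠ permAct n τ (basePt n) := by
      intro h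
      rw [h, segment_same] at hdim
      unfold faceDim at hdim
      rw [direction_affineSpan, vectorSpan_singleton] at hdim
      simp at hdim
    have hστ : σ ≠ τ := fun h => hne (by rw [h])
    -- both endpoints are maximizers of ℓ
    have hσF : permAct n σ (basePt n) ∈
        {x ∈ permutohedron n | ∀ y ∈ permutohedron n, ℓ y ≤ ℓ x} :=
      hF ▸ left_mem_segment ℝ _ _
    have hτF : permAct n τ (basePt n) ∈
        {x ∈ permutohedron n | ∀ y ∈ permutohedron n, ℓ y ≤ ℓ x} :=
      hF ▸ right_mem_segment ℝ _ _
    -- coordinates of ℓ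
    set c : Fin (n + 1) → ℝ := fun i => ℓ (fun j => if i = j then 1 else 0) with hcdef
    have hℓ : ∀ x, ℓ x = ∑ i, c i * x i := by
      intro x
      rw [LinearMap.pi_apply_eq_sum_univ]
      exact Finset.sum_congr rfl fun i _ => by rw [smul_eq_mul, mul_comm]
    have hℓp : ∀ ρ : Equiv.Perm (Fin (n + 1)),
        ℓ (permAct n ρ (basePt n)) = ∑ i, c (ρ i) * basePt n i := by
      intro ρ
      rw [hℓ, sum_perm_pt]
    set c' : Fin (n + 1) → ℝ := fun i => c (σ i) with hc'def
    -- c' is monotone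
    have hc'mono : Monotone c' := by
      intro i j hij
      rcases eq_or_lt_of_le hij with rfl | hlt
      · exact le_rfl
      · have hle : ℓ (permAct n (σ * Equiv.swap i j) (basePt n)) ≤ ℓ (permAct n σ (basePt n)) :=
          hσF.2 _ (vertex_mem _)
        rw [hℓp, hℓp] at hle
        have hre : ∑ k, c ((σ * Equiv.swap i j) k) * basePt n k
            = ∑ k, c' (Equiv.swap i j k) * basePt n k :=
          Finset.sum_congr rfl fun k _ => by rw [Equiv.Perm.mul_apply]
        rw [hre, sum_swap_mul c' (basePt n) hlt.ne] at hle
        have hw : basePt n i < basePt n j := basePt_strictMono hlt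
        nlinarith [hle, hw]
    -- equality for τ
    have heq : ∑ i, c' ((σ⁻¹ * τ) i) * basePt n i = ∑ i, c' i * basePt n i := by
      have h1 : ℓ (permAct n τ (basePt n)) = ℓ (permAct n σ (basePt n)) :=
        le_antisymm (hσF.2 _ (vertex_mem τ)) (hτF.2 _ (vertex_mem σ))
      rw [hℓp, hℓp] at h1
      have h2 : ∑ i, c (τ i) * basePt n i = ∑ i, c' ((σ⁻¹ * τ) i) * basePt n i :=
        Finset.sum_congr rfl fun i _ => by
          simp only [hc'def, Equiv.Perm.mul_apply, Equiv.Perm.inv_def, Equiv.apply_symm_apply]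
      rw [h2] at h1
      exact h1
    have hcc : c' ∘ (σ⁻¹ * τ) = c' := (key_eq_iff hc'mono _).1 heq
    have hπ0 : σ⁻¹ * τ ≠ 1 := fun h => hστ (inv_mul_eq_one.1 h)
    obtain ⟨b, hcsucc⟩ := exists_const_pair hπ0 hc'mono hcc
    have hswap : c' ∘ (Equiv.swap b.castSucc b.succ) = c' := by
      funext k
      rcases eq_or_ne k b.castSucc with rfl | hk1
      · simp only [Function.comp_apply, Equiv.swap_apply_left]
        exact hcsucc
      rcases eq_or_ne k b.succ with rfl | hk2
      · simp only [Function.comp_apply, Equiv.swap_apply_right]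
        exact hcsucc.symm
      · simp only [Function.comp_apply, Equiv.swap_apply_of_ne_of_ne hk1 hk2]
    -- the third maximizing vertex
    set ρ : Equiv.Perm (Fin (n + 1)) := σ * Equiv.swap b.castSucc b.succ with hρdef
    have hρmax : ℓ (permAct n ρ (basePt n)) = ℓ (permAct n σ (basePt n)) := by
      rw [hℓp, hℓp]
      have h2 : ∑ i, c (ρ i) * basePt n i = ∑ i, c' (Equiv.swap b.castSucc b.succ i) * basePt n i :=
        Finset.sum_congr rfl fun i _ => by rw [hρdef, Equiv.Perm.mul_apply]
      rw [h2]
      refine Finset.sum_congr rfl fun i _ => ?_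
      have h3 := congrFun hswap i
      simp only [Function.comp_apply] at h3
      rw [h3]
    have hρF : permAct n ρ (basePt n) ∈
        segment ℝ (permAct n σ (basePt n)) (permAct n τ (basePt n)) := by
      rw [hF]
      exact ⟨vertex_mem _, fun y hy => (hσF.2 y hy).trans_eq hρmax.symm⟩
    rcases segment_vertex _ _ _
        ((sum_sq_perm σ).trans (sum_sq_perm τ).symm)
        ((sum_sq_perm ρ).trans (sum_sq_perm τ).symm) hρF with h | h
    · have h4 := permAct_inj h
      have h5 : Equiv.swap b.castSucc b.succ = 1 := by
        have h6 : σ * Equiv.swap b.castSucc b.succ = σ * 1 := by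
          rw [mul_one, ← hρdef]; exact h4
        exact mul_left_cancel h6
      exact castSucc_ne_succ b (Equiv.swap_eq_one_iff.1 h5)
    · have h6 := permAct_inj h
      refine hcon ⟨b, ?_⟩
      rw [← h6, hρdef]
      group
  · rintro ⟨a, ha⟩
    have hτ : τ = σ * Equiv.swap a.castSucc a.succ := by
      rw [← ha]; group
    have hστ : σ ≠ τ := by
      intro h
      rw [← h] at ha
      simp at ha
      exact castSucc_ne_succ a (Equiv.swap_eq_one_iff.1 ha.symm) -- may need fixing
    have hne : permAct n σ (basePt n) ≠ permAct n τ (basePt n) :=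
      fun h => hστ (permAct_inj h)
    -- the linear functional
    set ℓ : (Fin (n + 1) → ℝ) →ₗ[ℝ] ℝ :=
      ∑ j, cA a (σ⁻¹ j) • LinearMap.proj j with hℓdef
    have hℓ : ∀ x, ℓ x = ∑ j, cA a (σ⁻¹ j) * x j := by
      intro x
      rw [hℓdef]
      simp [LinearMap.sum_apply, LinearMap.smul_apply, LinearMap.proj_apply, smul_eq_mul]
    have hℓp : ∀ ρ : Equiv.Perm (Fin (n + 1)),
        ℓ (permAct n ρ (basePt n)) = ∑ i, cA a ((σ⁻¹ * ρ) i) * basePt n i := by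
      intro ρ
      rw [hℓ]
      have := sum_perm_pt (n := n) (fun j => cA a (σ⁻¹ j)) ρ
      rw [this]
      rfl
    have hℓσ : ℓ (permAct n σ (basePt n)) = ∑ i, cA a i * basePt n i := by
      rw [hℓp]
      simp
    have hℓτ : ℓ (permAct n τ (basePt n)) = ∑ i, cA a i * basePt n i := by
      rw [hℓp, hτ]
      have h2 : σ⁻¹ * (σ * Equiv.swap a.castSucc a.succ) = Equiv.swap a.castSucc a.succ := by
        group
      rw [h2]
      refine Finset.sum_congr rfl fun i _ => ?_
      have h3 := congrFun (cA_comp_swap a) i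
      simp only [Function.comp_apply] at h3
      rw [h3]
    -- maximality
    have hmax : ∀ y ∈ permutohedron n, ℓ y ≤ ℓ (permAct n σ (basePt n)) := by
      intro y hy
      rw [hℓσ]
      have hsub : {x | ∃ ρ : Equiv.Perm (Fin (n + 1)), x = permAct n ρ (basePt n)} ⊆
          {x | ℓ x ≤ ∑ i, cA a i * basePt n i} := by
        rintro x ⟨ρ, rfl⟩
        simp only [Set.mem_setOf_eq]
        rw [hℓp]
        exact key_le (cA_monotone a) _
      exact convexHull_min hsub (convex_halfSpace_le ℓ.isLinear _) hy
    constructor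
    · refine ⟨ℓ, Set.Subset.antisymm ?_ ?_⟩
      · -- segment ⊆ face set
        intro x hx
        have hxP : x ∈ permutohedron n :=
          (convex_convexHull ℝ _).segment_subset (vertex_mem σ) (vertex_mem τ) hx
        refine ⟨hxP, ?_⟩
        obtain ⟨u, v, hu, hv, huv, rfl⟩ := hx
        intro y hy
        have hval : ℓ (u • permAct n σ (basePt n) + v • permAct n τ (basePt n))
            = ℓ (permAct n σ (basePt n)) := by
          rw [map_add, map_smul, map_smul, smul_eq_mul, smul_eq_mul, hℓτ, hℓσ]
          linear_combination (∑ i, cA a i * basePt n i) * huv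
        rw [hval]
        exact hmax y hy
      · -- face set ⊆ segment
        rintro x ⟨hxP, hxmax⟩
        have hxP' := hxP
        rw [permutohedron, mem_convexHull_iff_exists_fintype] at hxP'
        obtain ⟨ι, hfin, wt, z, hw0, hw1, hzS, hxe⟩ := hxP'
        have hℓx : ℓ x = ℓ (permAct n σ (basePt n)) :=
          le_antisymm (hmax x hxP) (hxmax _ (vertex_mem σ))
        have hzP : ∀ i, z i ∈ permutohedron n := fun i => subset_convexHull ℝ _ (hzS i)
        have hsum0 : ∑ i, wt i * (ℓ (permAct n σ (basePt n)) - ℓ (z i)) = 0 := by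
          have hmapped : ℓ x = ∑ i, wt i * ℓ (z i) := by
            rw [← hxe, map_sum]
            exact Finset.sum_congr rfl fun i _ => by rw [map_smul, smul_eq_mul]
          have : ∑ i, wt i * (ℓ (permAct n σ (basePt n)) - ℓ (z i))
              = (∑ i, wt i) * ℓ (permAct n σ (basePt n)) - ∑ i, wt i * ℓ (z i) := by
            rw [Finset.sum_mul, ← sum_sub_distrib]
            exact Finset.sum_congr rfl fun i _ => by ring
          rw [this, hw1, ← hmapped, hℓx]
          ring
        have hterm : ∀ i, wt i = 0 ∨ ℓ (z i) = ℓ (permAct n σ (basePt n)) := by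
          intro i
          have hnn : ∀ i ∈ univ, 0 ≤ wt i * (ℓ (permAct n σ (basePt n)) - ℓ (z i)) :=
            fun i _ => mul_nonneg (hw0 i) (by linarith [hmax (z i) (hzP i)])
          have h0 := (Finset.sum_eq_zero_iff_of_nonneg hnn).1 hsum0 i (mem_univ i)
          rcases mul_eq_zero.1 h0 with h | h
          · exact Or.inl h
          · exact Or.inr (by linarith [sub_eq_zero.1 h])
        have hz2 : ∀ i, wt i = 0 ∨ z i = permAct n σ (basePt n) ∨ z i = permAct n τ (basePt n) := by
          intro i
          rcases hterm i with h | h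
          · exact Or.inl h
          obtain ⟨ρ, hρ⟩ := hzS i
          right
          rw [hρ] at h ⊢
          rw [hℓp, hℓσ] at h
          have hccc := (key_eq_iff (cA_monotone a) (σ⁻¹ * ρ)).1 h
          rcases cA_perm_eq hccc with h4 | h4
          · left
            have : ρ = σ := by
              have := inv_mul_eq_one.1 h4
              exact this.symm
            rw [this]
          · right
            have : ρ = τ := by
              rw [hτ, ← h4]
              group
            rw [this]
        rw [← hxe]
        exact mem_seg_of_comb wt z _ _ hw0 hw1 hz2
    · -- dimension is 1
      unfold faceDim
      rw [← convexHull_pair, affineSpan_convexHull, direction_affineSpan, vectorSpan_pair]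
      have hvne : permAct n σ (basePt n) -ᵥ permAct n τ (basePt n) ≠ 0 := by
        rw [vsub_eq_sub, sub_ne_zero]
        exact hne
      exact finrank_span_singleton hvne
end
end

section
/- For every nonempty proper subset S ⊂ {1,…,n+1}, every x ∈ P_n satisfies Σ_{i∈S} x_i ≥ |S|(|S|+1)/2, and the set F_S is a facet of P_n. Moreover the assignment S ↦ F_S is a bijection from the nonempty proper subsets of {1,…,n+1} onto the set of facets of P_n; in particular P_n has exactly 2^{n+1} − 2 facets. -/
noncomputable section

/-- For a nonempty proper subset `S ⊂ {1,…,n+1}`, the set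
`F_S = {x ∈ P_n : Σ_{i∈S} x_i = |S|(|S|+1)/2}`. -/
def faceOfSubset (n : ℕ) (S : Finset (Fin (n + 1))) : Set (Fin (n + 1) → ℝ) :=
  {x ∈ permutohedron n | ∑ i ∈ S, x i = (S.card : ℝ) * (S.card + 1) / 2}

namespace S2
open Finset

variable {n : ℕ}

/-- indicator function of a coordinate -/
def ind (p : Fin (n + 1)) : Fin (n + 1) → ℝ := fun j => if p = j then 1 else 0

def vert (n : ℕ) (σ : Equiv.Perm (Fin (n + 1))) : Fin (n + 1) → ℝ := permAct n σ (basePt n)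

lemma vert_apply (σ : Equiv.Perm (Fin (n + 1))) (i : Fin (n + 1)) :
    vert n σ i = ((σ⁻¹ i : Fin (n + 1)) : ℕ) + 1 := rfl

lemma vert_mem (σ : Equiv.Perm (Fin (n + 1))) : vert n σ ∈ permutohedron n :=
  subset_convexHull ℝ _ ⟨σ, rfl⟩

lemma gauss (k : ℕ) : ∑ j ∈ range k, ((j : ℝ) + 1) = k * (k + 1) / 2 := by
  induction k with
  | zero => simp
  | succ p ih => rw [sum_range_succ, ih]; push_cast; ring

/-- sum over the filter of small indices equals a range sum -/
lemma sum_filter_lt (k : ℕ) (hk : k ≤ n + 1) (F : Fin (n + 1) → ℝ) (F' : ℕ → ℝ)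
    (hF : ∀ j : Fin (n + 1), F j = F' (j : ℕ)) :
    ∑ j ∈ univ.filter (fun j : Fin (n + 1) => (j : ℕ) < k), F j = ∑ m ∈ range k, F' m := by
  refine Finset.sum_bij' (fun (j : Fin (n+1)) _ => (j : ℕ))
    (fun m hm => (⟨m, lt_of_lt_of_le (mem_range.mp hm) hk⟩ : Fin (n+1)))
    (fun j hj => ?_) (fun m hm => ?_) (fun j hj => ?_) (fun m hm => ?_) (fun j hj => ?_)
  · simpa using (mem_filter.mp hj).2
  · simpa using mem_range.mp hm
  · simp
  · simp
  · exact hF j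

lemma card_filter_lt (k : ℕ) (hk : k ≤ n + 1) :
    (univ.filter (fun j : Fin (n + 1) => (j : ℕ) < k)).card = k := by
  have h := sum_filter_lt (n := n) k hk (fun _ => (1 : ℝ)) (fun _ => 1) (fun _ => rfl)
  simpa [Finset.sum_const, mul_comm] using h

/-- strictly monotone maps into ℕ grow at least linearly -/
lemma strictMono_nat_le {k : ℕ} (f : Fin k → ℕ) (hf : StrictMono f) :
    ∀ j : Fin k, (j : ℕ) ≤ f j := by
  have key : ∀ m : ℕ, ∀ h : m < k, m ≤ f ⟨m, h⟩ := by
    intro m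
    induction m with
    | zero => intro h; omega
    | succ p ih =>
      intro h
      have hp : p < k := by omega
      have h1 : f ⟨p, hp⟩ < f ⟨p + 1, h⟩ := hf (by simp [Fin.lt_def])
      have h2 := ih hp
      omega
  intro j
  have := key (j : ℕ) j.isLt
  simpa using this

lemma sum_fin_ge (T : Finset (Fin (n + 1))) :
    (T.card : ℝ) * (T.card + 1) / 2 ≤ ∑ j ∈ T, (((j : ℕ) : ℝ) + 1) := by
  classical
  set k := T.card with hk
  let iso := T.orderIsoOfFin hk.symm
  have hmono : StrictMono (fun m : Fin k => ((iso m : Fin (n + 1)) : ℕ)) := by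
    intro a b hab
    exact Fin.val_strictMono (Subtype.coe_lt_coe.mpr (iso.strictMono hab))
  have h1 : ∑ j ∈ T, (((j : ℕ) : ℝ) + 1) = ∑ m : Fin k, (((iso m : Fin (n+1)) : ℕ) + 1 : ℝ) := by
    rw [← Finset.sum_coe_sort T]
    exact (Equiv.sum_comp iso.toEquiv (fun t => (((t : Fin (n+1)) : ℕ) + 1 : ℝ))).symm
  rw [h1, ← gauss, ← Fin.sum_univ_eq_sum_range (fun m => ((m : ℝ) + 1))]
  apply Finset.sum_le_sum
  intro m _
  have := strictMono_nat_le _ hmono m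
  exact add_le_add_left (Nat.cast_le.mpr this) 1

lemma sum_fin_eq_of_lt (T : Finset (Fin (n + 1))) (h : ∀ j ∈ T, (j : ℕ) < T.card) :
    ∑ j ∈ T, (((j : ℕ) : ℝ) + 1) = T.card * (T.card + 1) / 2 := by
  have hk : T.card ≤ n + 1 := by simpa using Finset.card_le_card (Finset.subset_univ T)
  have hT : T = univ.filter (fun j : Fin (n + 1) => (j : ℕ) < T.card) := by
    apply Finset.eq_of_subset_of_card_le
    · intro j hj; simp [h j hj]
    · rw [card_filter_lt _ hk]
  conv_lhs => rw [hT]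
  rw [sum_filter_lt _ hk _ (fun m => (m : ℝ) + 1) (fun j => rfl), gauss]

lemma lt_card_of_sum_fin_eq (T : Finset (Fin (n + 1)))
    (heq : ∑ j ∈ T, (((j : ℕ) : ℝ) + 1) = T.card * (T.card + 1) / 2) :
    ∀ j ∈ T, (j : ℕ) < T.card := by
  classical
  by_contra hcon
  push_neg at hcon
  obtain ⟨j₀, hj₀, hge⟩ := hcon
  set k := T.card with hk
  let iso := T.orderIsoOfFin hk.symm
  have hmono : StrictMono (fun m : Fin k => ((iso m : Fin (n + 1)) : ℕ)) := by
    intro a b hab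
    exact Fin.val_strictMono (Subtype.coe_lt_coe.mpr (iso.strictMono hab))
  have h1 : ∑ j ∈ T, (((j : ℕ) : ℝ) + 1) = ∑ m : Fin k, (((iso m : Fin (n+1)) : ℕ) + 1 : ℝ) := by
    rw [← Finset.sum_coe_sort T]
    exact (Equiv.sum_comp iso.toEquiv (fun t => (((t : Fin (n+1)) : ℕ) + 1 : ℝ))).symm
  have hstrict : ∑ m : Fin k, ((m : ℝ) + 1) < ∑ m : Fin k, (((iso m : Fin (n+1)) : ℕ) + 1 : ℝ) := by
    apply Finset.sum_lt_sum
    · intro m _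
      exact add_le_add_left (Nat.cast_le.mpr (strictMono_nat_le _ hmono m)) 1
    · have hkpos : 0 < k := Finset.card_pos.mpr ⟨j₀, hj₀⟩
      refine ⟨iso.symm ⟨j₀, hj₀⟩, Finset.mem_univ _, ?_⟩
      have : (iso (iso.symm ⟨j₀, hj₀⟩) : Fin (n+1)) = j₀ := by simp
      rw [this]
      have hlt : ((iso.symm ⟨j₀, hj₀⟩ : Fin k) : ℕ) < k := (iso.symm ⟨j₀, hj₀⟩).isLt
      have : ((iso.symm ⟨j₀, hj₀⟩ : Fin k) : ℕ) < (j₀ : ℕ) := by omega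
      exact add_lt_add_left (Nat.cast_lt.mpr this) 1
  have h2 : ∑ m : Fin k, ((m : ℝ) + 1) = (k : ℝ) * (k + 1) / 2 := by
    rw [Fin.sum_univ_eq_sum_range (fun m => (m : ℝ) + 1), gauss]
  rw [h1] at heq
  rw [h2] at hstrict
  linarith

lemma downclosed_lt (U : Finset (Fin (n + 1)))
    (h : ∀ j j' : Fin (n + 1), j ≤ j' → j' ∈ U → j ∈ U) :
    ∀ j ∈ U, (j : ℕ) < U.card := by
  intro j hj
  have hsub : Finset.Iic j ⊆ U := fun t ht => h t j (Finset.mem_Iic.mp ht) hj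
  have := Finset.card_le_card hsub
  rw [Fin.card_Iic] at this
  omega

/-- indicator cost function of a subset -/
def cInd (S : Finset (Fin (n + 1))) : Fin (n + 1) → ℝ := fun i => if i ∈ S then 0 else 1

lemma vert_sum_image (σ : Equiv.Perm (Fin (n + 1))) (S : Finset (Fin (n + 1))) :
    ∑ i ∈ S, vert n σ i = ∑ j ∈ S.image ⇑σ⁻¹, (((j : ℕ) : ℝ) + 1) := by
  rw [Finset.sum_image (fun a _ b _ h => (Equiv.injective σ⁻¹) h)]
  rfl

lemma mem_image_inv (σ : Equiv.Perm (Fin (n + 1))) (S : Finset (Fin (n + 1))) (j : Fin (n + 1)) :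
    j ∈ S.image ⇑σ⁻¹ ↔ σ j ∈ S := by
  simp only [Finset.mem_image]
  constructor
  · rintro ⟨i, hi, rfl⟩; simpa using hi
  · intro h; exact ⟨σ j, h, by simp⟩

lemma card_image_inv (σ : Equiv.Perm (Fin (n + 1))) (S : Finset (Fin (n + 1))) :
    (S.image ⇑σ⁻¹).card = S.card :=
  Finset.card_image_of_injective _ (Equiv.injective σ⁻¹)

lemma sortedVert_sum (S : Finset (Fin (n + 1))) :
    ∑ i ∈ S, vert n (Tuple.sort (cInd S)) i = (S.card : ℝ) * (S.card + 1) / 2 := by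
  classical
  set τ := Tuple.sort (cInd S) with hτ
  rw [vert_sum_image]
  set U := S.image ⇑τ⁻¹ with hU
  have hmem : ∀ j, j ∈ U ↔ τ j ∈ S := fun j => mem_image_inv τ S j
  have hdown : ∀ j j' : Fin (n + 1), j ≤ j' → j' ∈ U → j ∈ U := by
    intro j j' hle hj'
    rw [hmem] at hj' ⊢
    have hmono := Tuple.monotone_sort (cInd S) hle
    simp only [Function.comp_apply] at hmono
    rw [← hτ] at hmono
    by_contra hcon
    have h1 : cInd S (τ j) = 1 := if_neg hcon
    have h2 : cInd S (τ j') = 0 := if_pos hj'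
    rw [h1, h2] at hmono
    linarith
  have hcard : U.card = S.card := card_image_inv τ S
  rw [sum_fin_eq_of_lt U (downclosed_lt U hdown), hcard]

lemma isLinearMap_sumS (S : Finset (Fin (n + 1))) :
    IsLinearMap ℝ (fun x : Fin (n + 1) → ℝ => ∑ i ∈ S, x i) :=
  ⟨fun a b => by simp [Finset.sum_add_distrib],
   fun r a => by simp [Pi.smul_apply, smul_eq_mul, Finset.mul_sum]⟩

lemma sum_S_ge (S : Finset (Fin (n + 1))) :
    ∀ x ∈ permutohedron n, (S.card : ℝ) * (S.card + 1) / 2 ≤ ∑ i ∈ S, x i := by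
  intro x hx
  have hconv : Convex ℝ {y : Fin (n + 1) → ℝ | (S.card : ℝ) * (S.card + 1) / 2 ≤ ∑ i ∈ S, y i} :=
    convex_halfSpace_ge (isLinearMap_sumS S) _
  refine convexHull_min ?_ hconv hx
  rintro y ⟨σ, rfl⟩
  show (S.card : ℝ) * (S.card + 1) / 2 ≤ ∑ i ∈ S, vert n σ i
  rw [vert_sum_image]
  have := sum_fin_ge (n := n) (S.image ⇑σ⁻¹)
  rwa [card_image_inv] at this

/-- total coordinate sum constant -/
lemma sum_univ_eq (x : Fin (n + 1) → ℝ) (hx : x ∈ permutohedron n) :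
    ∑ i, x i = ((n + 1 : ℕ) : ℝ) * ((n + 1 : ℕ) + 1) / 2 := by
  have hconv : Convex ℝ {y : Fin (n + 1) → ℝ | ∑ i, y i = ((n + 1 : ℕ) : ℝ) * ((n + 1 : ℕ) + 1) / 2} :=
    convex_hyperplane (isLinearMap_sumS Finset.univ) _
  refine convexHull_min ?_ hconv hx
  rintro y ⟨σ, rfl⟩
  show ∑ i, vert n σ i = _
  have h1 : ∑ i, vert n σ i = ∑ i : Fin (n + 1), (((i : ℕ) : ℝ) + 1) := by
    have := Equiv.sum_comp σ⁻¹ (fun i : Fin (n+1) => ((i : ℕ) + 1 : ℝ))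
    simpa [vert_apply] using this
  rw [h1, Fin.sum_univ_eq_sum_range (fun m => (m : ℝ) + 1), gauss]

def sumLF (n : ℕ) (S : Finset (Fin (n + 1))) : (Fin (n + 1) → ℝ) →ₗ[ℝ] ℝ :=
  ∑ i ∈ S, LinearMap.proj i

lemma sumLF_apply (S : Finset (Fin (n + 1))) (x : Fin (n + 1) → ℝ) :
    sumLF n S x = ∑ i ∈ S, x i := by
  simp [sumLF, LinearMap.sum_apply]

lemma ind_sum (S : Finset (Fin (n + 1))) (p : Fin (n + 1)) :
    ∑ i ∈ S, ind p i = if p ∈ S then (1 : ℝ) else 0 := by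
  simp [ind, Finset.sum_ite_eq]

lemma finrank_ker_functional (g : (Fin (n + 1) → ℝ) →ₗ[ℝ] ℝ) (d : Fin (n + 1) → ℝ)
    (hd : g d ≠ 0) : Module.finrank ℝ (LinearMap.ker g) + 1 = n + 1 := by
  have hrange : LinearMap.range g = ⊤ := by
    rw [LinearMap.range_eq_top]
    intro r
    refine ⟨(r / g d) • d, ?_⟩
    rw [map_smul, smul_eq_mul]
    field_simp
  have hrn := LinearMap.finrank_range_add_finrank_ker g
  rw [hrange, finrank_top, Module.finrank_self] at hrn
  rw [Module.finrank_fintype_fun_eq_card, Fintype.card_fin] at hrn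
  omega

lemma rank_drop (p : Submodule ℝ (Fin (n + 1) → ℝ)) (g : (Fin (n + 1) → ℝ) →ₗ[ℝ] ℝ)
    (d : Fin (n + 1) → ℝ) (hdp : d ∈ p) (hgd : g d ≠ 0) :
    Module.finrank ℝ ↥(p ⊓ LinearMap.ker g) + 1 = Module.finrank ℝ ↥p := by
  have hker := finrank_ker_functional g d hgd
  have hsup : Module.finrank ℝ ↥(p ⊔ LinearMap.ker g) = n + 1 := by
    have hlt : LinearMap.ker g < p ⊔ LinearMap.ker g := by
      refine lt_of_le_of_ne le_sup_right ?_
      intro hEq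
      have hmem : d ∈ p ⊔ LinearMap.ker g := Submodule.mem_sup_left hdp
      rw [← hEq] at hmem
      exact hgd hmem
    have h1 := Submodule.finrank_lt_finrank_of_lt hlt
    have h2 := Submodule.finrank_le (p ⊔ LinearMap.ker g)
    rw [Module.finrank_fintype_fun_eq_card, Fintype.card_fin] at h2
    omega
  have hie := Submodule.finrank_sup_add_finrank_inf_eq p (LinearMap.ker g)
  omega

lemma W_rank (S : Finset (Fin (n + 1))) (i j : Fin (n + 1)) (hi : i ∈ S) (hj : j ∉ S) :
    Module.finrank ℝ ↥(LinearMap.ker (sumLF n Finset.univ) ⊓ LinearMap.ker (sumLF n S)) + 2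
      = n + 1 := by
  have h1 : Module.finrank ℝ ↥(LinearMap.ker (sumLF n Finset.univ)) + 1 = n + 1 := by
    refine finrank_ker_functional _ (ind i) ?_
    rw [sumLF_apply, ind_sum]
    simp
  have hd : (ind i - ind j) ∈ LinearMap.ker (sumLF n Finset.univ) := by
    rw [LinearMap.mem_ker, map_sub, sumLF_apply, sumLF_apply, ind_sum, ind_sum]
    simp
  have hgd : sumLF n S (ind i - ind j) = 1 := by
    rw [map_sub, sumLF_apply, sumLF_apply, ind_sum, ind_sum, if_pos hi, if_neg hj]
    ring
  have h2 := rank_drop (LinearMap.ker (sumLF n Finset.univ)) (sumLF n S) _ hd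
    (by rw [hgd]; exact one_ne_zero)
  omega

lemma vspan_le_ker {A : Set (Fin (n + 1) → ℝ)} (g : (Fin (n + 1) → ℝ) →ₗ[ℝ] ℝ) (r : ℝ)
    (h : ∀ x ∈ A, g x = r) : vectorSpan ℝ A ≤ LinearMap.ker g := by
  rw [vectorSpan_def]
  apply Submodule.span_le.mpr
  rintro v ⟨x, hx, y, hy, rfl⟩
  simp only [SetLike.mem_coe, LinearMap.mem_ker, vsub_eq_sub, map_sub, h x hx, h y hy, sub_self]

lemma li_pair (i₀ j₀ : Fin (n + 1)) (r : Fin (n + 1) → Fin (n + 1))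
    (hr : ∀ i, r i = i₀ ∨ r i = j₀) :
    LinearIndependent ℝ (fun i : {i : Fin (n + 1) // i ≠ i₀ ∧ i ≠ j₀} =>
      (ind i.1 - ind (r i.1) : Fin (n + 1) → ℝ)) := by
  classical
  apply LinearIndependent.of_comp
    (LinearMap.funLeft ℝ ℝ (Subtype.val : {i : Fin (n + 1) // i ≠ i₀ ∧ i ≠ j₀} → Fin (n + 1)))
  have hcomp : (⇑(LinearMap.funLeft ℝ ℝ
        (Subtype.val : {i : Fin (n + 1) // i ≠ i₀ ∧ i ≠ j₀} → Fin (n + 1))) ∘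
      fun i : {i : Fin (n + 1) // i ≠ i₀ ∧ i ≠ j₀} =>
        (ind i.1 - ind (r i.1) : Fin (n + 1) → ℝ))
      = ⇑(Pi.basisFun ℝ {i : Fin (n + 1) // i ≠ i₀ ∧ i ≠ j₀}) := by
    funext i
    ext t
    have h2 : r i.1 ≠ t.1 := by
      rcases hr i.1 with h | h <;> rw [h]
      · exact fun hc => t.2.1 hc.symm
      · exact fun hc => t.2.2 hc.symm
    simp only [Function.comp_apply, LinearMap.funLeft_apply, Pi.sub_apply, ind,
      Pi.basisFun_apply, Pi.single_apply, if_neg h2, sub_zero]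
    by_cases h3 : t = i
    · rw [if_pos h3, if_pos (congrArg Subtype.val h3).symm]
    · rw [if_neg h3, if_neg (fun hc => h3 (Subtype.ext hc.symm))]
  rw [hcomp]
  exact (Pi.basisFun ℝ _).linearIndependent

lemma card_subtype_two (i₀ j₀ : Fin (n + 1)) (hij : i₀ ≠ j₀) :
    Fintype.card {i : Fin (n + 1) // i ≠ i₀ ∧ i ≠ j₀} = n - 1 := by
  classical
  rw [Fintype.card_subtype]
  have h : univ.filter (fun i : Fin (n + 1) => i ≠ i₀ ∧ i ≠ j₀) = univ \ {i₀, j₀} := by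
    ext i
    simp [not_or]
  rw [h, Finset.card_sdiff_of_subset (Finset.subset_univ _), Finset.card_univ, Fintype.card_fin]
  rw [Finset.card_insert_of_notMem (by simp [hij]), Finset.card_singleton]
  omega

lemma swap_vert (σ : Equiv.Perm (Fin (n + 1))) (i i' : Fin (n + 1)) :
    (fun t => vert n σ (Equiv.swap i i' t)) = vert n ((σ⁻¹ * Equiv.swap i i')⁻¹) := by
  funext t
  simp [vert, permAct, Equiv.Perm.mul_apply]

lemma vert_sub_swap (σ : Equiv.Perm (Fin (n + 1))) (i i' : Fin (n + 1)) (h : i ≠ i') :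
    vert n σ - (fun t => vert n σ (Equiv.swap i i' t))
      = (vert n σ i - vert n σ i') • (ind i - ind i') := by
  funext t
  simp only [Pi.sub_apply, Pi.smul_apply, smul_eq_mul, ind]
  rcases eq_or_ne t i with rfl | h1
  · rw [Equiv.swap_apply_left, if_pos rfl, if_neg (Ne.symm h)]
    ring
  · rcases eq_or_ne t i' with rfl | h2
    · rw [Equiv.swap_apply_right, if_pos rfl, if_neg h]
      ring
    · rw [Equiv.swap_apply_of_ne_of_ne h1 h2, if_neg (Ne.symm h1), if_neg (Ne.symm h2)]
      ring

lemma vert_inj_vals (σ : Equiv.Perm (Fin (n + 1))) (i i' : Fin (n + 1)) (h : i ≠ i') :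
    vert n σ i ≠ vert n σ i' := by
  simp only [vert_apply]
  intro hc
  have h1 : ((σ⁻¹ i : Fin (n + 1)) : ℕ) = ((σ⁻¹ i' : Fin (n + 1)) : ℕ) := by
    exact_mod_cast (by linarith :
      (((σ⁻¹ i : Fin (n + 1)) : ℕ) : ℝ) = (((σ⁻¹ i' : Fin (n + 1)) : ℕ) : ℝ))
  exact h (Equiv.injective σ⁻¹ (Fin.val_injective h1))

lemma ind_sub_mem_vspan_aux (A : Set (Fin (n + 1) → ℝ)) (σ : Equiv.Perm (Fin (n + 1)))
    (i i' : Fin (n + 1)) (h : i ≠ i') (h1 : vert n σ ∈ A)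
    (h2 : (fun t => vert n σ (Equiv.swap i i' t)) ∈ A) :
    (ind i - ind i' : Fin (n + 1) → ℝ) ∈ vectorSpan ℝ A := by
  have hsub : vert n σ - (fun t => vert n σ (Equiv.swap i i' t)) ∈ vectorSpan ℝ A := by
    have := vsub_mem_vectorSpan ℝ h1 h2
    rwa [vsub_eq_sub] at this
  have heq := vert_sub_swap σ i i' h
  have hne : vert n σ i - vert n σ i' ≠ 0 := sub_ne_zero.mpr (vert_inj_vals σ i i' h)
  have hfin : (ind i - ind i' : Fin (n + 1) → ℝ)
      = (vert n σ i - vert n σ i')⁻¹ • (vert n σ - fun t => vert n σ (Equiv.swap i i' t)) := by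
    rw [heq, smul_smul, inv_mul_cancel₀ hne, one_smul]
  rw [hfin]
  exact Submodule.smul_mem _ _ hsub

lemma swap_mem_iff (S : Finset (Fin (n + 1))) (i i' : Fin (n + 1)) (hmem : i ∈ S ↔ i' ∈ S) :
    ∀ t : Fin (n + 1), t ∈ S ↔ Equiv.swap i i' t ∈ S := by
  intro t
  rcases eq_or_ne t i with rfl | h1
  · rw [Equiv.swap_apply_left]; exact hmem
  · rcases eq_or_ne t i' with rfl | h2
    · rw [Equiv.swap_apply_right]; exact hmem.symm
    · rw [Equiv.swap_apply_of_ne_of_ne h1 h2]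

lemma ind_sub_mem_vspan_face (S : Finset (Fin (n + 1))) (i i' : Fin (n + 1)) (h : i ≠ i')
    (hmem : i ∈ S ↔ i' ∈ S) :
    (ind i - ind i' : Fin (n + 1) → ℝ) ∈ vectorSpan ℝ (faceOfSubset n S) := by
  classical
  set τ := Tuple.sort (cInd S) with hτ
  have hx₀F : vert n τ ∈ faceOfSubset n S := ⟨vert_mem τ, sortedVert_sum S⟩
  have hysum : ∑ t ∈ S, vert n τ (Equiv.swap i i' t) = ∑ t ∈ S, vert n τ t := by
    refine Finset.sum_equiv (Equiv.swap i i') (fun t => ?_) (fun t _ => rfl)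
    exact swap_mem_iff S i i' hmem t
  have hyF : (fun t => vert n τ (Equiv.swap i i' t)) ∈ faceOfSubset n S := by
    constructor
    · rw [swap_vert]; exact vert_mem _
    · show ∑ t ∈ S, vert n τ (Equiv.swap i i' t) = _
      rw [hysum]; exact hx₀F.2
  exact ind_sub_mem_vspan_aux _ τ i i' h hx₀F hyF

lemma faceDim_eq_vspan (A : Set (Fin (n + 1) → ℝ)) :
    faceDim A = Module.finrank ℝ (vectorSpan ℝ A) := by
  rw [faceDim, direction_affineSpan]

lemma faceDim_FS_ge (S : Finset (Fin (n + 1))) (hne : S.Nonempty) (hproper : S ≠ Finset.univ) :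
    n - 1 ≤ faceDim (faceOfSubset n S) := by
  classical
  obtain ⟨i₀, hi₀⟩ := hne
  obtain ⟨j₀, hj₀⟩ : ∃ j, j ∉ S := by
    by_contra hcon
    push_neg at hcon
    exact hproper (Finset.eq_univ_iff_forall.mpr hcon)
  have hij : i₀ ≠ j₀ := fun hc => hj₀ (hc ▸ hi₀)
  set r : Fin (n + 1) → Fin (n + 1) := fun i => if i ∈ S then i₀ else j₀ with hrdef
  have hr : ∀ i, r i = i₀ ∨ r i = j₀ := fun i => by
    by_cases h : i ∈ S <;> simp [hrdef, h]
  have hli := li_pair i₀ j₀ r hr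
  have hmem : ∀ i : {i : Fin (n + 1) // i ≠ i₀ ∧ i ≠ j₀},
      (ind i.1 - ind (r i.1) : Fin (n + 1) → ℝ) ∈ vectorSpan ℝ (faceOfSubset n S) := by
    intro i
    by_cases h : i.1 ∈ S
    · have hri : r i.1 = i₀ := if_pos h
      rw [hri]
      exact ind_sub_mem_vspan_face S _ _ i.2.1 (by simp [h, hi₀])
    · have hri : r i.1 = j₀ := if_neg h
      rw [hri]
      exact ind_sub_mem_vspan_face S _ _ i.2.2 (by simp [h, hj₀])
  have hli2 : LinearIndependent ℝ (fun i : {i : Fin (n + 1) // i ≠ i₀ ∧ i ≠ j₀} =>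
      (⟨ind i.1 - ind (r i.1), hmem i⟩ : ↥(vectorSpan ℝ (faceOfSubset n S)))) := by
    apply LinearIndependent.of_comp (vectorSpan ℝ (faceOfSubset n S)).subtype
    exact hli
  have hcard := hli2.fintype_card_le_finrank
  rw [card_subtype_two i₀ j₀ hij] at hcard
  rw [faceDim_eq_vspan]
  exact hcard

lemma vspan_FS_le (S : Finset (Fin (n + 1))) :
    vectorSpan ℝ (faceOfSubset n S)
      ≤ LinearMap.ker (sumLF n Finset.univ) ⊓ LinearMap.ker (sumLF n S) := by
  refine le_inf (vspan_le_ker _ (((n + 1 : ℕ) : ℝ) * ((n + 1 : ℕ) + 1) / 2) ?_)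
    (vspan_le_ker _ ((S.card : ℝ) * (S.card + 1) / 2) ?_)
  · intro x hx
    rw [sumLF_apply]
    exact sum_univ_eq x hx.1
  · intro x hx
    rw [sumLF_apply]
    exact hx.2

lemma faceDim_FS (S : Finset (Fin (n + 1))) (hne : S.Nonempty) (hproper : S ≠ Finset.univ) :
    faceDim (faceOfSubset n S) = n - 1 := by
  obtain ⟨i₀, hi₀⟩ := hne
  obtain ⟨j₀, hj₀⟩ : ∃ j, j ∉ S := by
    by_contra hcon
    push_neg at hcon
    exact hproper (Finset.eq_univ_iff_forall.mpr hcon)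
  have hW := W_rank S i₀ j₀ hi₀ hj₀
  have hub : faceDim (faceOfSubset n S)
      ≤ Module.finrank ℝ ↥(LinearMap.ker (sumLF n Finset.univ) ⊓ LinearMap.ker (sumLF n S)) := by
    rw [faceDim_eq_vspan]
    exact Submodule.finrank_mono (vspan_FS_le S)
  have hlb := faceDim_FS_ge S ⟨i₀, hi₀⟩ hproper
  omega

lemma isFace_FS (S : Finset (Fin (n + 1))) :
    IsFace (permutohedron n) (faceOfSubset n S) := by
  classical
  refine ⟨-(sumLF n S), ?_⟩
  ext x
  simp only [Set.mem_setOf_eq, LinearMap.neg_apply, neg_le_neg_iff, faceOfSubset]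
  constructor
  · rintro ⟨hxP, hxsum⟩
    refine ⟨hxP, fun y hy => ?_⟩
    rw [sumLF_apply, sumLF_apply]
    have := sum_S_ge S y hy
    linarith
  · rintro ⟨hxP, hmax⟩
    refine ⟨hxP, ?_⟩
    have h1 := hmax _ (vert_mem (Tuple.sort (cInd S)))
    rw [sumLF_apply, sumLF_apply, sortedVert_sum S] at h1
    have h2 := sum_S_ge S x hxP
    linarith

lemma li_one (i₀ : Fin (n + 1)) :
    LinearIndependent ℝ (fun i : {i : Fin (n + 1) // i ≠ i₀} =>
      (ind i.1 - ind i₀ : Fin (n + 1) → ℝ)) := by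
  classical
  apply LinearIndependent.of_comp
    (LinearMap.funLeft ℝ ℝ (Subtype.val : {i : Fin (n + 1) // i ≠ i₀} → Fin (n + 1)))
  have hcomp : (⇑(LinearMap.funLeft ℝ ℝ
        (Subtype.val : {i : Fin (n + 1) // i ≠ i₀} → Fin (n + 1))) ∘
      fun i : {i : Fin (n + 1) // i ≠ i₀} => (ind i.1 - ind i₀ : Fin (n + 1) → ℝ))
      = ⇑(Pi.basisFun ℝ {i : Fin (n + 1) // i ≠ i₀}) := by
    funext i
    ext t
    have h2 : i₀ ≠ t.1 := fun hc => t.2 hc.symm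
    simp only [Function.comp_apply, LinearMap.funLeft_apply, Pi.sub_apply, ind,
      Pi.basisFun_apply, Pi.single_apply, if_neg h2, sub_zero]
    by_cases h3 : t = i
    · rw [if_pos h3, if_pos (congrArg Subtype.val h3).symm]
    · rw [if_neg h3, if_neg (fun hc => h3 (Subtype.ext hc.symm))]
  rw [hcomp]
  exact (Pi.basisFun ℝ _).linearIndependent

lemma card_subtype_one (i₀ : Fin (n + 1)) :
    Fintype.card {i : Fin (n + 1) // i ≠ i₀} = n := by
  classical
  rw [Fintype.card_subtype]
  have h : univ.filter (fun i : Fin (n + 1) => i ≠ i₀) = univ \ {i₀} := by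
    ext i; simp
  rw [h, Finset.card_sdiff_of_subset (Finset.subset_univ _), Finset.card_univ, Fintype.card_fin,
    Finset.card_singleton]
  omega

lemma faceDim_P_ge : n ≤ faceDim (permutohedron n) := by
  classical
  set i₀ : Fin (n + 1) := 0
  have hmem : ∀ i : {i : Fin (n + 1) // i ≠ i₀},
      (ind i.1 - ind i₀ : Fin (n + 1) → ℝ) ∈ vectorSpan ℝ (permutohedron n) := by
    intro i
    refine ind_sub_mem_vspan_aux _ 1 i.1 i₀ i.2 (vert_mem 1) ?_
    rw [swap_vert]
    exact vert_mem _
  have hli2 : LinearIndependent ℝ (fun i : {i : Fin (n + 1) // i ≠ i₀} =>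
      (⟨ind i.1 - ind i₀, hmem i⟩ : ↥(vectorSpan ℝ (permutohedron n)))) := by
    apply LinearIndependent.of_comp (vectorSpan ℝ (permutohedron n)).subtype
    exact li_one i₀
  have hcard := hli2.fintype_card_le_finrank
  rw [card_subtype_one i₀] at hcard
  rw [faceDim_eq_vspan]
  exact hcard

lemma dim_drop (A : Set (Fin (n + 1) → ℝ)) (hA : A ⊆ permutohedron n)
    (S T : Finset (Fin (n + 1))) (i₀ j₀ : Fin (n + 1)) (hi₀ : i₀ ∈ S) (hj₀ : j₀ ∉ S)
    (rS rT : ℝ) (hS : ∀ x ∈ A, ∑ i ∈ S, x i = rS) (hT : ∀ x ∈ A, ∑ i ∈ T, x i = rT)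
    (d : Fin (n + 1) → ℝ) (hd0 : ∑ i, d i = 0) (hdS : ∑ i ∈ S, d i = 0)
    (hdT : ∑ i ∈ T, d i = 1) (hdim : faceDim A = n - 1) (hn : 1 ≤ n) : False := by
  classical
  have hWrank := W_rank S i₀ j₀ hi₀ hj₀
  have hdW : d ∈ LinearMap.ker (sumLF n Finset.univ) ⊓ LinearMap.ker (sumLF n S) := by
    refine Submodule.mem_inf.mpr ⟨?_, ?_⟩
    · rw [LinearMap.mem_ker, sumLF_apply]; exact hd0
    · rw [LinearMap.mem_ker, sumLF_apply]; exact hdS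
  have hdrop := rank_drop (LinearMap.ker (sumLF n Finset.univ) ⊓ LinearMap.ker (sumLF n S))
    (sumLF n T) d hdW (by rw [sumLF_apply, hdT]; exact one_ne_zero)
  have hle : vectorSpan ℝ A
      ≤ (LinearMap.ker (sumLF n Finset.univ) ⊓ LinearMap.ker (sumLF n S))
        ⊓ LinearMap.ker (sumLF n T) := by
    refine le_inf (le_inf ?_ ?_) ?_
    · refine vspan_le_ker _ (((n + 1 : ℕ) : ℝ) * ((n + 1 : ℕ) + 1) / 2) ?_
      intro x hx
      rw [sumLF_apply]
      exact sum_univ_eq x (hA hx)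
    · refine vspan_le_ker _ rS ?_
      intro x hx
      rw [sumLF_apply]
      exact hS x hx
    · refine vspan_le_ker _ rT ?_
      intro x hx
      rw [sumLF_apply]
      exact hT x hx
  have hmono := Submodule.finrank_mono hle
  rw [← faceDim_eq_vspan] at hmono
  omega

lemma abel_sum (E D : ℕ → ℝ) (N : ℕ) :
    ∑ m ∈ range (N + 1), E m * D m
      = E N * (∑ m ∈ range (N + 1), D m)
        - ∑ m ∈ range N, (E (m + 1) - E m) * (∑ k ∈ range (m + 1), D k) := by
  induction N with
  | zero => simp
  | succ p ih =>
    rw [sum_range_succ (f := fun m => E m * D m), ih,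
      sum_range_succ (f := fun m => (E (m + 1) - E m) * (∑ k ∈ range (m + 1), D k)),
      Finset.sum_range_succ D (p + 1)]
    ring

/-- the sorted cost sequence -/
def eSeq (n : ℕ) (c : Fin (n + 1) → ℝ) : ℕ → ℝ :=
  fun m => if h : m < n + 1 then c (Tuple.sort c ⟨m, h⟩) else 0

/-- the coordinates of `x` read in sorted order -/
def DSeq (n : ℕ) (c : Fin (n + 1) → ℝ) (x : Fin (n + 1) → ℝ) : ℕ → ℝ :=
  fun m => if h : m < n + 1 then x (Tuple.sort c ⟨m, h⟩) else 0

/-- the level subsets -/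
def SmSet (n : ℕ) (c : Fin (n + 1) → ℝ) (m : ℕ) : Finset (Fin (n + 1)) :=
  (univ.filter (fun j : Fin (n + 1) => (j : ℕ) < m + 1)).image (Tuple.sort c)

lemma eSeq_mono (c : Fin (n + 1) → ℝ) {a b : ℕ} (hab : a ≤ b) (hb : b < n + 1) :
    eSeq n c a ≤ eSeq n c b := by
  have ha : a < n + 1 := lt_of_le_of_lt hab hb
  rw [eSeq, eSeq, dif_pos ha, dif_pos hb]
  exact Tuple.monotone_sort c (show (⟨a, ha⟩ : Fin (n + 1)) ≤ ⟨b, hb⟩ from by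
    simp [Fin.le_def, hab])

lemma DSeq_sum (c x : Fin (n + 1) → ℝ) :
    ∑ m ∈ range (n + 1), DSeq n c x m = ∑ i, x i := by
  rw [← Fin.sum_univ_eq_sum_range (DSeq n c x) (n + 1)]
  have h1 : ∀ i : Fin (n + 1), DSeq n c x i = x (Tuple.sort c i) := by
    intro i
    rw [DSeq, dif_pos i.isLt, Fin.eta]
  rw [Finset.sum_congr rfl (fun i _ => h1 i)]
  exact Equiv.sum_comp (Tuple.sort c) x

lemma lin_sum (c x : Fin (n + 1) → ℝ) :
    ∑ i, x i * c i = ∑ m ∈ range (n + 1), eSeq n c m * DSeq n c x m := by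
  rw [← Fin.sum_univ_eq_sum_range (fun m => eSeq n c m * DSeq n c x m) (n + 1)]
  rw [← Equiv.sum_comp (Tuple.sort c) (fun i => x i * c i)]
  apply Finset.sum_congr rfl
  intro i _
  show x (Tuple.sort c i) * c (Tuple.sort c i) = eSeq n c i * DSeq n c x i
  rw [eSeq, DSeq, dif_pos i.isLt, dif_pos i.isLt, Fin.eta, mul_comm]

lemma DSeq_partial (c x : Fin (n + 1) → ℝ) (m : ℕ) (hm : m < n + 1) :
    ∑ k ∈ range (m + 1), DSeq n c x k = ∑ i ∈ SmSet n c m, x i := by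
  rw [SmSet, Finset.sum_image (fun a _ b _ h => Equiv.injective (Tuple.sort c) h)]
  exact (sum_filter_lt (m + 1) (by omega) (fun j => x (Tuple.sort c j)) (DSeq n c x)
    (fun j => by rw [DSeq, dif_pos j.isLt, Fin.eta])).symm

lemma SmSet_card (c : Fin (n + 1) → ℝ) (m : ℕ) (hm : m < n + 1) :
    (SmSet n c m).card = m + 1 := by
  rw [SmSet, Finset.card_image_of_injective _ (Equiv.injective (Tuple.sort c)),
    card_filter_lt (m + 1) (by omega)]

lemma mem_SmSet (c : Fin (n + 1) → ℝ) (m : ℕ) (j : Fin (n + 1)) :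
    Tuple.sort c j ∈ SmSet n c m ↔ (j : ℕ) < m + 1 := by
  rw [SmSet, Finset.mem_image]
  constructor
  · rintro ⟨j', hj', hEq⟩
    have := Equiv.injective (Tuple.sort c) hEq
    subst this
    simpa using hj'
  · intro h
    exact ⟨j, by simpa using h, rfl⟩

lemma DSeq_star (c : Fin (n + 1) → ℝ) (k : ℕ) (hk : k < n + 1) :
    DSeq n c (vert n (Tuple.sort c)) k = (k : ℝ) + 1 := by
  rw [DSeq, dif_pos hk, vert_apply]; simp

lemma star_partial (c : Fin (n + 1) → ℝ) (m : ℕ) (hm : m < n + 1) :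
    ∑ i ∈ SmSet n c m, vert n (Tuple.sort c) i
      = (((m : ℕ) + 1 : ℕ) : ℝ) * (((m : ℕ) + 1 : ℕ) + 1) / 2 := by
  rw [← DSeq_partial c _ m hm]
  rw [Finset.sum_congr rfl (fun k hk => DSeq_star c k (by
    have := mem_range.mp hk; omega))]
  rw [gauss (m + 1)]

/-- the master formula : value of the linear functional on the permutohedron -/
lemma master (c x : Fin (n + 1) → ℝ) (hx : x ∈ permutohedron n) :
    ∑ i, x i * c i
      = eSeq n c n * (((n + 1 : ℕ) : ℝ) * ((n + 1 : ℕ) + 1) / 2)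
        - ∑ m ∈ range n, (eSeq n c (m + 1) - eSeq n c m) * (∑ i ∈ SmSet n c m, x i) := by
  have h2 : ∑ m ∈ range n, (eSeq n c (m + 1) - eSeq n c m) * (∑ k ∈ range (m + 1), DSeq n c x k)
      = ∑ m ∈ range n, (eSeq n c (m + 1) - eSeq n c m) * (∑ i ∈ SmSet n c m, x i) :=
    Finset.sum_congr rfl (fun m hm => by
      rw [DSeq_partial c x m (by have := mem_range.mp hm; omega)])
  rw [lin_sum, abel_sum (eSeq n c) (DSeq n c x) n, DSeq_sum, sum_univ_eq x hx, h2]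

lemma surj_face (hn : 1 ≤ n) (G : Set (Fin (n + 1) → ℝ))
    (hface : IsFace (permutohedron n) G) (hdim : faceDim G = n - 1) :
    ∃ S : Finset (Fin (n + 1)), S.Nonempty ∧ S ≠ Finset.univ ∧ G = faceOfSubset n S := by
  classical
  obtain ⟨ℓ, hG⟩ := hface
  set c : Fin (n + 1) → ℝ := fun i => ℓ (ind i) with hc
  have hℓ : ∀ x : Fin (n + 1) → ℝ, ℓ x = ∑ i, x i * c i := by
    intro x
    conv_lhs => rw [pi_eq_sum_univ x]
    rw [map_sum]
    refine Finset.sum_congr rfl fun i _ => ?_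
    rw [map_smul, smul_eq_mul]
    rfl
  set μ : ℕ → ℝ := fun m => (((m + 1 : ℕ)) : ℝ) * (((m + 1 : ℕ) : ℝ) + 1) / 2 with hμ
  have hgap : ∀ m ∈ range n, 0 ≤ eSeq n c (m + 1) - eSeq n c m := fun m hm =>
    sub_nonneg.mpr (eSeq_mono c (Nat.le_succ m) (by have := mem_range.mp hm; omega))
  have hterm : ∀ x ∈ permutohedron n, ∀ m ∈ range n, μ m ≤ ∑ i ∈ SmSet n c m, x i := by
    intro x hx m hm
    have h1 := sum_S_ge (SmSet n c m) x hx
    rwa [SmSet_card c m (by have := mem_range.mp hm; omega)] at h1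
  have hxstarP := vert_mem (n := n) (Tuple.sort c)
  have hstar_val : ∀ m ∈ range n,
      ∑ i ∈ SmSet n c m, vert n (Tuple.sort c) i = μ m := fun m hm =>
    star_partial c m (by have := mem_range.mp hm; omega)
  have hub : ∀ x ∈ permutohedron n, ℓ x ≤ ℓ (vert n (Tuple.sort c)) := by
    intro x hx
    rw [hℓ x, hℓ (vert n (Tuple.sort c)), master c x hx, master c _ hxstarP]
    have h2 : ∑ m ∈ range n,
          (eSeq n c (m + 1) - eSeq n c m) * (∑ i ∈ SmSet n c m, vert n (Tuple.sort c) i)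
        ≤ ∑ m ∈ range n, (eSeq n c (m + 1) - eSeq n c m) * (∑ i ∈ SmSet n c m, x i) := by
      refine Finset.sum_le_sum fun m hm => ?_
      refine mul_le_mul_of_nonneg_left ?_ (hgap m hm)
      rw [hstar_val m hm]
      exact hterm x hx m hm
    linarith
  have hchar : ∀ x, x ∈ permutohedron n → (x ∈ G ↔ ∀ m ∈ range n,
      (eSeq n c (m + 1) - eSeq n c m) * ((∑ i ∈ SmSet n c m, x i) - μ m) = 0) := by
    intro x hx
    rw [hG]
    simp only [Set.mem_setOf_eq]
    constructor
    · rintro ⟨-, hmax⟩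
      have h1 : ℓ (vert n (Tuple.sort c)) ≤ ℓ x := hmax _ hxstarP
      have h2 : ℓ x ≤ ℓ (vert n (Tuple.sort c)) := hub x hx
      have h3 : ℓ x = ℓ (vert n (Tuple.sort c)) := le_antisymm h2 h1
      rw [hℓ, hℓ, master c x hx, master c _ hxstarP] at h3
      have hst : ∑ m ∈ range n,
            (eSeq n c (m + 1) - eSeq n c m) * (∑ i ∈ SmSet n c m, vert n (Tuple.sort c) i)
          = ∑ m ∈ range n, (eSeq n c (m + 1) - eSeq n c m) * μ m :=
        Finset.sum_congr rfl (fun m hm => by rw [hstar_val m hm])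
      have hA : ∑ m ∈ range n, (eSeq n c (m + 1) - eSeq n c m) * (∑ i ∈ SmSet n c m, x i)
          = ∑ m ∈ range n, (eSeq n c (m + 1) - eSeq n c m) * μ m := by linarith
      have h4 : ∑ m ∈ range n,
          (eSeq n c (m + 1) - eSeq n c m) * ((∑ i ∈ SmSet n c m, x i) - μ m) = 0 := by
        rw [Finset.sum_congr rfl (fun m hm =>
          mul_sub (eSeq n c (m + 1) - eSeq n c m) (∑ i ∈ SmSet n c m, x i) (μ m)),
          Finset.sum_sub_distrib, hA, sub_self]
      exact fun m hm => (Finset.sum_eq_zero_iff_of_nonneg (fun m hm =>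
        mul_nonneg (hgap m hm) (sub_nonneg.mpr (hterm x hx m hm)))).mp h4 m hm
    · intro hall
      refine ⟨hx, fun y hy => ?_⟩
      have h1 : ℓ x = ℓ (vert n (Tuple.sort c)) := by
        rw [hℓ, hℓ, master c x hx, master c _ hxstarP]
        have hA : ∑ m ∈ range n, (eSeq n c (m + 1) - eSeq n c m) * (∑ i ∈ SmSet n c m, x i)
            = ∑ m ∈ range n,
              (eSeq n c (m + 1) - eSeq n c m) * (∑ i ∈ SmSet n c m, vert n (Tuple.sort c) i) := by
          refine Finset.sum_congr rfl fun m hm => ?_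
          rw [hstar_val m hm]
          have := hall m hm
          have h5 : (eSeq n c (m + 1) - eSeq n c m) * (∑ i ∈ SmSet n c m, x i)
              - (eSeq n c (m + 1) - eSeq n c m) * μ m = 0 := by
            rw [← mul_sub]; exact this
          linarith
        rw [hA]
      rw [h1]
      exact hub y hy
  set J := (range n).filter (fun m => eSeq n c (m + 1) - eSeq n c m ≠ 0) with hJ
  by_cases hJe : J = ∅
  · exfalso
    have hGP : G = permutohedron n := by
      apply Set.Subset.antisymm
      · rw [hG]; exact fun x hx => hx.1
      · intro x hx
        apply (hchar x hx).mpr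
        intro m hm
        have hg0 : eSeq n c (m + 1) - eSeq n c m = 0 := by
          by_contra hne
          have : m ∈ J := Finset.mem_filter.mpr ⟨hm, hne⟩
          rw [hJe] at this
          simp at this
        rw [hg0, zero_mul]
    have hge := faceDim_P_ge (n := n)
    rw [← hGP, hdim] at hge
    omega
  · obtain ⟨m₀, hm₀⟩ := Finset.nonempty_iff_ne_empty.mpr hJe
    have hm₀r : m₀ ∈ range n := (Finset.mem_filter.mp hm₀).1
    have hm₀n : m₀ < n := mem_range.mp hm₀r
    have hm₀g : eSeq n c (m₀ + 1) - eSeq n c m₀ ≠ 0 := (Finset.mem_filter.mp hm₀).2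
    by_cases hJs : J = {m₀}
    · refine ⟨SmSet n c m₀, ?_, ?_, ?_⟩
      · have h1 := SmSet_card c m₀ (by omega)
        exact Finset.card_pos.mp (by omega)
      · intro hcon
        have h1 := SmSet_card c m₀ (by omega)
        rw [hcon, Finset.card_univ, Fintype.card_fin] at h1
        omega
      · ext x
        constructor
        · intro hxG
          have hxP : x ∈ permutohedron n := by rw [hG] at hxG; exact hxG.1
          have h1 := ((hchar x hxP).mp hxG) m₀ hm₀r
          have h2 : (∑ i ∈ SmSet n c m₀, x i) - μ m₀ = 0 := by
            rcases mul_eq_zero.mp h1 with h | h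
            · exact absurd h hm₀g
            · exact h
          refine ⟨hxP, ?_⟩
          rw [SmSet_card c m₀ (by omega)]
          have h3 := sub_eq_zero.mp h2
          rw [h3]
        · rintro ⟨hxP, hxsum⟩
          apply (hchar x hxP).mpr
          intro m hm
          by_cases hmJ : m ∈ J
          · have hmm : m = m₀ := by rw [hJs] at hmJ; simpa using hmJ
            subst hmm
            have h3 : ∑ i ∈ SmSet n c m, x i = μ m := by
              rw [hxsum, SmSet_card c m (by omega)]
            rw [h3, sub_self, mul_zero]
          · have hg0 : eSeq n c (m + 1) - eSeq n c m = 0 := by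
              by_contra hne
              exact hmJ (Finset.mem_filter.mpr ⟨hm, hne⟩)
            rw [hg0, zero_mul]
    · exfalso
      obtain ⟨m₁, hm₁, hne⟩ : ∃ m₁ ∈ J, m₁ ≠ m₀ := by
        by_contra hcon
        push_neg at hcon
        exact hJs (Finset.eq_singleton_iff_unique_mem.mpr ⟨hm₀, fun x hx => hcon x hx⟩)
      have haJ' : min m₀ m₁ ∈ J ∧ max m₀ m₁ ∈ J := by
        rcases le_total m₀ m₁ with h | h
        · rw [min_eq_left h, max_eq_right h]; exact ⟨hm₀, hm₁⟩
        · rw [min_eq_right h, max_eq_left h]; exact ⟨hm₁, hm₀⟩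
      set a := min m₀ m₁ with hadef
      set b := max m₀ m₁ with hbdef
      have hab : a < b := by
        rcases lt_or_gt_of_ne hne with h | h
        · rw [hadef, hbdef]; omega
        · rw [hadef, hbdef]; omega
      have han : a < n := mem_range.mp (Finset.mem_filter.mp haJ'.1).1
      have hbn : b < n := mem_range.mp (Finset.mem_filter.mp haJ'.2).1
      have hag : eSeq n c (a + 1) - eSeq n c a ≠ 0 := (Finset.mem_filter.mp haJ'.1).2
      have hbg : eSeq n c (b + 1) - eSeq n c b ≠ 0 := (Finset.mem_filter.mp haJ'.2).2
      have hpSa : Tuple.sort c ⟨a + 1, by omega⟩ ∉ SmSet n c a := by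
        rw [mem_SmSet]; simp
      have hqSa : Tuple.sort c ⟨b + 1, by omega⟩ ∉ SmSet n c a := by
        rw [mem_SmSet]; simp; omega
      have hpSb : Tuple.sort c ⟨a + 1, by omega⟩ ∈ SmSet n c b := by
        rw [mem_SmSet]; simp; omega
      have hqSb : Tuple.sort c ⟨b + 1, by omega⟩ ∉ SmSet n c b := by
        rw [mem_SmSet]; simp
      have hi₀ : Tuple.sort c ⟨0, by omega⟩ ∈ SmSet n c a := by
        rw [mem_SmSet]; simp
      have hconstr : ∀ (m : ℕ), m ∈ J → ∀ x ∈ G, ∑ i ∈ SmSet n c m, x i = μ m := by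
        intro m hmJ x hxG
        have hxP : x ∈ permutohedron n := by rw [hG] at hxG; exact hxG.1
        have h1 := ((hchar x hxP).mp hxG) m (Finset.mem_filter.mp hmJ).1
        rcases mul_eq_zero.mp h1 with h | h
        · exact absurd h (Finset.mem_filter.mp hmJ).2
        · exact sub_eq_zero.mp h
      refine dim_drop G (by rw [hG]; exact fun x hx => hx.1) (SmSet n c a) (SmSet n c b)
        (Tuple.sort c ⟨0, by omega⟩) (Tuple.sort c ⟨a + 1, by omega⟩) hi₀ hpSa
        (μ a) (μ b) (hconstr a haJ'.1) (hconstr b haJ'.2)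
        (fun t => ind (Tuple.sort c ⟨a + 1, by omega⟩) t
          - ind (Tuple.sort c ⟨b + 1, by omega⟩) t) ?_ ?_ ?_ hdim hn
      · rw [Finset.sum_sub_distrib, ind_sum, ind_sum]
        simp
      · rw [Finset.sum_sub_distrib, ind_sum, ind_sum, if_neg hpSa, if_neg hqSa]
        ring
      · rw [Finset.sum_sub_distrib, ind_sum, ind_sum, if_pos hpSb, if_neg hqSb]
        ring

lemma inj_face (hn : 1 ≤ n) (S T : Finset (Fin (n + 1)))
    (hSne : S.Nonempty) (hSproper : S ≠ Finset.univ)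
    (hTne : T.Nonempty) (hTproper : T ≠ Finset.univ)
    (hFS : faceOfSubset n S = faceOfSubset n T) : S = T := by
  classical
  by_contra hST
  obtain ⟨i₀, hi₀⟩ := hSne
  obtain ⟨j₀, hj₀⟩ : ∃ j, j ∉ S := by
    by_contra hcon
    push_neg at hcon
    exact hSproper (Finset.eq_univ_iff_forall.mpr hcon)
  by_cases hTc : T = Sᶜ
  · -- complement case : arithmetic contradiction
    have hx₀F : vert n (Tuple.sort (cInd S)) ∈ faceOfSubset n S :=
      ⟨vert_mem _, sortedVert_sum S⟩
    have hx₀T : vert n (Tuple.sort (cInd S)) ∈ faceOfSubset n T := hFS ▸ hx₀F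
    have hE1 : ∑ i ∈ S, vert n (Tuple.sort (cInd S)) i
        = (S.card : ℝ) * (S.card + 1) / 2 := hx₀F.2
    have hE2 := hx₀T.2
    rw [hTc, Finset.card_compl, Fintype.card_fin] at hE2
    have hE3 : (∑ i ∈ S, vert n (Tuple.sort (cInd S)) i)
        + ∑ i ∈ Sᶜ, vert n (Tuple.sort (cInd S)) i
        = ((n + 1 : ℕ) : ℝ) * ((n + 1 : ℕ) + 1) / 2 := by
      rw [Finset.sum_add_sum_compl S]
      exact sum_univ_eq _ (vert_mem _)
    have hk1 : 1 ≤ S.card := Finset.card_pos.mpr ⟨i₀, hi₀⟩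
    have hkn : S.card ≤ n := by
      have := Finset.card_lt_card (Finset.ssubset_univ_iff.mpr hSproper)
      rw [Finset.card_univ, Fintype.card_fin] at this
      omega
    have hcast : ((n + 1 - S.card : ℕ) : ℝ) = ((n : ℝ) + 1) - (S.card : ℝ) := by
      rw [Nat.cast_sub (by omega)]
      push_cast
      ring
    rw [hcast] at hE2
    have hk1' : (1 : ℝ) ≤ (S.card : ℝ) := by exact_mod_cast hk1
    have hkn' : (S.card : ℝ) ≤ (n : ℝ) := by exact_mod_cast hkn
    have hN : ((n + 1 : ℕ) : ℝ) = (n : ℝ) + 1 := by push_cast; ring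
    rw [hN] at hE3
    nlinarith [hE1, hE2, hE3, hk1', hkn']
  · -- non-complement case : dimension contradiction
    have hTsub : ∀ x ∈ faceOfSubset n S, ∑ i ∈ T, x i
        = (T.card : ℝ) * (T.card + 1) / 2 := by
      intro x hx
      exact (hFS ▸ hx : x ∈ faceOfSubset n T).2
    have hSsub : ∀ x ∈ faceOfSubset n S, ∑ i ∈ S, x i
        = (S.card : ℝ) * (S.card + 1) / 2 := fun x hx => hx.2
    have hdim := faceDim_FS S ⟨i₀, hi₀⟩ hSproper
    obtain ⟨p, q, hpqS, hpT, hqT⟩ : ∃ p q : Fin (n + 1),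
        (p ∈ S ↔ q ∈ S) ∧ p ∈ T ∧ q ∉ T := by
      by_cases hCD : (T \ S).Nonempty ∧ ((S ∪ T)ᶜ : Finset (Fin (n + 1))).Nonempty
      · obtain ⟨⟨p, hp⟩, ⟨q, hq⟩⟩ := hCD
        rw [Finset.mem_sdiff] at hp
        rw [Finset.mem_compl, Finset.mem_union] at hq
        push_neg at hq
        exact ⟨p, q, by tauto, hp.1, hq.2⟩
      · have hor : T \ S = ∅ ∨ ((S ∪ T)ᶜ : Finset (Fin (n + 1))) = ∅ := by
          rcases not_and_or.mp hCD with h | h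
          · left; exact Finset.not_nonempty_iff_eq_empty.mp h
          · right; exact Finset.not_nonempty_iff_eq_empty.mp h
        have hAne : (S ∩ T).Nonempty := by
          rw [Finset.nonempty_iff_ne_empty]
          intro hA
          rcases hor with h | h
          · have hTS : T ⊆ S := Finset.sdiff_eq_empty_iff_subset.mp h
            obtain ⟨t, ht⟩ := hTne
            have : t ∈ S ∩ T := Finset.mem_inter.mpr ⟨hTS ht, ht⟩
            rw [hA] at this
            simp at this
          · apply hTc
            have hU : (S ∪ T) = Finset.univ := (Finset.compl_eq_empty_iff _).mp h
            ext i
            simp only [Finset.mem_compl]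
            constructor
            · intro hiT hiS
              have : i ∈ S ∩ T := Finset.mem_inter.mpr ⟨hiS, hiT⟩
              rw [hA] at this
              simp at this
            · intro hiS
              have hmem : i ∈ S ∪ T := by rw [hU]; exact Finset.mem_univ i
              rcases Finset.mem_union.mp hmem with h' | h'
              · exact absurd h' hiS
              · exact h'
        have hBne : (S \ T).Nonempty := by
          rw [Finset.nonempty_iff_ne_empty]
          intro hB
          have hST' : S ⊆ T := Finset.sdiff_eq_empty_iff_subset.mp hB
          rcases hor with h | h
          · exact hST (Finset.Subset.antisymm hST' (Finset.sdiff_eq_empty_iff_subset.mp h))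
          · apply hTproper
            have hU : (S ∪ T) = Finset.univ := (Finset.compl_eq_empty_iff _).mp h
            rw [Finset.union_eq_right.mpr hST'] at hU
            exact hU
        obtain ⟨p, hp⟩ := hAne
        obtain ⟨q, hq⟩ := hBne
        rw [Finset.mem_inter] at hp
        rw [Finset.mem_sdiff] at hq
        exact ⟨p, q, by tauto, hp.2, hq.2⟩
    refine dim_drop (faceOfSubset n S) (fun x hx => hx.1) S T i₀ j₀ hi₀ hj₀ _ _ hSsub hTsub
      (fun t => ind p t - ind q t) ?_ ?_ ?_ hdim hn
    · rw [Finset.sum_sub_distrib, ind_sum, ind_sum]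
      simp
    · rw [Finset.sum_sub_distrib, ind_sum, ind_sum]
      by_cases h : p ∈ S
      · rw [if_pos h, if_pos (hpqS.mp h)]
        ring
      · rw [if_neg h, if_neg (fun hq' => h (hpqS.mpr hq'))]
        ring
    · rw [Finset.sum_sub_distrib, ind_sum, ind_sum, if_pos hpT, if_neg hqT]
      ring

end S2

/-- For every nonempty proper `S ⊂ {1,…,n+1}`, every `x ∈ P_n` satisfies
`Σ_{i∈S} x_i ≥ |S|(|S|+1)/2` and `F_S` is a facet of `P_n`; moreover `S ↦ F_S` is a
bijection onto the set of facets of `P_n`, so `P_n` has exactly `2^{n+1} − 2` facets. -/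


theorem statement2 (n : ℕ) (hn : 1 ≤ n) :
    (∀ S : Finset (Fin (n + 1)), S.Nonempty → S ≠ Finset.univ →
      (∀ x ∈ permutohedron n, (S.card : ℝ) * (S.card + 1) / 2 ≤ ∑ i ∈ S, x i) ∧
      IsFace (permutohedron n) (faceOfSubset n S) ∧
      faceDim (faceOfSubset n S) = n - 1) ∧
    Set.BijOn (faceOfSubset n)
      {S : Finset (Fin (n + 1)) | S.Nonempty ∧ S ≠ Finset.univ}
      {G : Set (Fin (n + 1) → ℝ) | IsFace (permutohedron n) G ∧ faceDim G = n - 1} ∧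
    {G : Set (Fin (n + 1) → ℝ) |
        IsFace (permutohedron n) G ∧ faceDim G = n - 1}.ncard = 2 ^ (n + 1) - 2 := by
  classical
  have hbij : Set.BijOn (faceOfSubset n)
      {S : Finset (Fin (n + 1)) | S.Nonempty ∧ S ≠ Finset.univ}
      {G : Set (Fin (n + 1) → ℝ) | IsFace (permutohedron n) G ∧ faceDim G = n - 1} := by
    refine ⟨?_, ?_, ?_⟩
    · rintro S ⟨h1, h2⟩
      exact ⟨S2.isFace_FS S, S2.faceDim_FS S h1 h2⟩
    · rintro S ⟨h1, h2⟩ T ⟨h3, h4⟩ hEq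
      exact S2.inj_face hn S T h1 h2 h3 h4 hEq
    · rintro G ⟨h1, h2⟩
      obtain ⟨S, hS1, hS2, hS3⟩ := S2.surj_face hn G h1 h2
      exact ⟨S, ⟨hS1, hS2⟩, hS3.symm⟩
  refine ⟨?_, hbij, ?_⟩
  · intro S hne hproper
    exact ⟨fun x hx => S2.sum_S_ge S x hx, S2.isFace_FS S, S2.faceDim_FS S hne hproper⟩
  · rw [← hbij.image_eq, Set.ncard_image_of_injOn hbij.injOn]
    have hset : {S : Finset (Fin (n + 1)) | S.Nonempty ∧ S ≠ Finset.univ}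
        = ↑(Finset.univ.filter
            (fun S : Finset (Fin (n + 1)) => S.Nonempty ∧ S ≠ Finset.univ)) := by
      ext S
      simp
    rw [hset, Set.ncard_coe_finset]
    have hcard2 : ({∅, Finset.univ} : Finset (Finset (Fin (n + 1)))).card = 2 := by
      rw [Finset.card_insert_of_notMem, Finset.card_singleton]
      simp only [Finset.mem_singleton]
      intro h
      have h0 : (0 : Fin (n + 1)) ∈ (∅ : Finset (Fin (n + 1))) := by
        rw [h]; exact Finset.mem_univ _
      simp at h0
    have hfe : Finset.univ.filter
          (fun S : Finset (Fin (n + 1)) => S.Nonempty ∧ S ≠ Finset.univ)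
        = Finset.univ \ ({∅, Finset.univ} : Finset (Finset (Fin (n + 1)))) := by
      ext S
      simp only [Finset.mem_filter, Finset.mem_univ, true_and, Finset.mem_sdiff,
        Finset.mem_insert, Finset.mem_singleton, not_or, Finset.nonempty_iff_ne_empty]
    rw [hfe, Finset.card_sdiff_of_subset (Finset.subset_univ _), hcard2, Finset.card_univ]
    simp [Fintype.card_finset]

end
end

section
/- For every nonempty proper subset S ⊂ {1,…,n+1}, the vertices of P_n lying in F_S are exactly the points σ·v whose coordinates at the positions in S form the set {1,…,|S|} (i.e. {(σ·v)_i : i ∈ S} = {1,…,|S|}); consequently F_S contains exactly |S|! · (n+1−|S|)! vertices of P_n. -/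
noncomputable section

/-! ### Auxiliary development -/

def genPt (n : ℕ) (σ : Equiv.Perm (Fin (n + 1))) : Fin (n + 1) → ℝ :=
  permAct n σ (basePt n)

lemma genPt_apply (n : ℕ) (σ : Equiv.Perm (Fin (n + 1))) (i : Fin (n + 1)) :
    genPt n σ i = ((σ⁻¹ i : Fin (n + 1)) : ℕ) + 1 := rfl

lemma genPt_inj (n : ℕ) : Function.Injective (genPt n) := by
  intro σ τ h
  have h' : ∀ i, ((σ⁻¹ i : Fin (n+1)) : ℕ) = ((τ⁻¹ i : Fin (n+1)) : ℕ) := by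
    intro i
    have := congrFun h i
    rw [genPt_apply, genPt_apply] at this
    exact_mod_cast Nat.cast_injective
      (by linarith : (((σ⁻¹ i : Fin (n+1)) : ℕ):ℝ) = ((τ⁻¹ i : Fin (n+1)) : ℕ))
  have hinv : σ⁻¹ = τ⁻¹ := Equiv.ext fun i => Fin.ext (h' i)
  exact inv_injective hinv

/-! The rearrangement-type key inequality, via the sum-of-squares trick. -/

lemma key_le (m : ℕ) (π : Equiv.Perm (Fin m)) :
    ∑ j : Fin m, ((j : ℕ) + 1 : ℝ) * ((π j : ℕ) + 1 : ℝ) ≤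
      ∑ j : Fin m, ((j : ℕ) + 1 : ℝ) * ((j : ℕ) + 1 : ℝ) := by
  set f : Fin m → ℝ := fun j => ((j : ℕ) + 1 : ℝ) with hf
  have hsq : (0:ℝ) ≤ ∑ j : Fin m, (f j - f (π j))^2 :=
    Finset.sum_nonneg fun j _ => sq_nonneg _
  have hcomp : ∑ j : Fin m, f (π j) * f (π j) = ∑ j : Fin m, f j * f j :=
    Equiv.sum_comp π (fun j => f j * f j)
  have hexp : ∑ j : Fin m, (f j - f (π j))^2 =
      2 * (∑ j : Fin m, f j * f j) - 2 * ∑ j : Fin m, f j * f (π j) := by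
    rw [show (2:ℝ) * (∑ j : Fin m, f j * f j) =
        (∑ j : Fin m, f j * f j) + ∑ j : Fin m, f (π j) * f (π j) by rw [hcomp]; ring]
    rw [Finset.mul_sum, ← Finset.sum_add_distrib, ← Finset.sum_sub_distrib]
    exact Finset.sum_congr rfl fun j _ => by ring
  linarith [hsq, hexp.symm ▸ hsq]

lemma key_eq (m : ℕ) (π : Equiv.Perm (Fin m))
    (h : ∑ j : Fin m, ((j : ℕ) + 1 : ℝ) * ((π j : ℕ) + 1 : ℝ) =
      ∑ j : Fin m, ((j : ℕ) + 1 : ℝ) * ((j : ℕ) + 1 : ℝ)) : π = 1 := by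
  set f : Fin m → ℝ := fun j => ((j : ℕ) + 1 : ℝ) with hf
  have hcomp : ∑ j : Fin m, f (π j) * f (π j) = ∑ j : Fin m, f j * f j :=
    Equiv.sum_comp π (fun j => f j * f j)
  have hexp : ∑ j : Fin m, (f j - f (π j))^2 =
      2 * (∑ j : Fin m, f j * f j) - 2 * ∑ j : Fin m, f j * f (π j) := by
    rw [show (2:ℝ) * (∑ j : Fin m, f j * f j) =
        (∑ j : Fin m, f j * f j) + ∑ j : Fin m, f (π j) * f (π j) by rw [hcomp]; ring]
    rw [Finset.mul_sum, ← Finset.sum_add_distrib, ← Finset.sum_sub_distrib]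
    exact Finset.sum_congr rfl fun j _ => by ring
  have hz : ∑ j : Fin m, (f j - f (π j))^2 = 0 := by rw [hexp, h]; ring
  have hall := (Finset.sum_eq_zero_iff_of_nonneg (fun j _ => sq_nonneg (f j - f (π j)))).1 hz
  ext j
  have := hall j (Finset.mem_univ j)
  have h2 : f j = f (π j) := by nlinarith [this]
  have : ((j:ℕ):ℝ) = ((π j : ℕ):ℝ) := by simpa [hf] using h2
  have := Nat.cast_injective this
  simpa [Fin.ext_iff] using this.symm

lemma dot_reindex (n : ℕ) (σ τ : Equiv.Perm (Fin (n + 1))) :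
    ∑ i, genPt n σ i * genPt n τ i =
      ∑ j : Fin (n+1), ((j : ℕ) + 1 : ℝ) * (((σ.trans τ⁻¹) j : ℕ) + 1 : ℝ) := by
  rw [← Equiv.sum_comp σ (fun i => genPt n σ i * genPt n τ i)]
  refine Finset.sum_congr rfl fun j _ => ?_
  simp [genPt, permAct, basePt, Equiv.trans_apply]

lemma dot_self (n : ℕ) (σ : Equiv.Perm (Fin (n + 1))) :
    ∑ i, genPt n σ i * genPt n σ i =
      ∑ j : Fin (n+1), ((j : ℕ) + 1 : ℝ) * ((j : ℕ) + 1 : ℝ) := by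
  have := dot_reindex n σ σ
  simpa using this

lemma dot_le (n : ℕ) (σ τ : Equiv.Perm (Fin (n + 1))) :
    ∑ i, genPt n σ i * genPt n τ i ≤ ∑ i, genPt n σ i * genPt n σ i := by
  rw [dot_reindex, dot_self]; exact key_le _ _

lemma dot_eq (n : ℕ) (σ τ : Equiv.Perm (Fin (n + 1)))
    (h : ∑ i, genPt n σ i * genPt n τ i = ∑ i, genPt n σ i * genPt n σ i) : τ = σ := by
  rw [dot_reindex, dot_self] at h
  have hπ := key_eq _ _ h
  refine Equiv.ext fun j => ?_
  have h1 : (σ.trans τ⁻¹) j = j := by rw [hπ]; rfl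
  have h2 : τ⁻¹ (σ j) = j := h1
  calc τ j = τ (τ⁻¹ (σ j)) := by rw [h2]
    _ = σ j := τ.apply_symm_apply _

/-! ### The permutohedron as the hull of a finite set, and its vertices -/

def genFinset (n : ℕ) : Finset (Fin (n + 1) → ℝ) := Finset.image (genPt n) Finset.univ

lemma genSet_eq (n : ℕ) :
    {x : Fin (n+1) → ℝ | ∃ σ : Equiv.Perm (Fin (n + 1)), x = permAct n σ (basePt n)} =
      ↑(genFinset n) := by
  ext x
  simp [genFinset, genPt, eq_comm]

lemma permutohedron_eq (n : ℕ) : permutohedron n = convexHull ℝ ↑(genFinset n) := by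
  rw [permutohedron, genSet_eq]

/-- the exposing functional for `genPt n σ` -/
def expFun (n : ℕ) (σ : Equiv.Perm (Fin (n + 1))) : (Fin (n + 1) → ℝ) →ₗ[ℝ] ℝ :=
  ∑ i, genPt n σ i • LinearMap.proj i

lemma expFun_apply (n : ℕ) (σ : Equiv.Perm (Fin (n + 1))) (x : Fin (n+1) → ℝ) :
    expFun n σ x = ∑ i, genPt n σ i * x i := by
  simp [expFun, LinearMap.sum_apply]

lemma le_on_hull (n : ℕ) (σ : Equiv.Perm (Fin (n + 1))) :
    ∀ y ∈ permutohedron n, expFun n σ y ≤ expFun n σ (genPt n σ) := by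
  intro y hy
  rw [permutohedron_eq] at hy
  have hconv : Convex ℝ {z : Fin (n+1) → ℝ | expFun n σ z ≤ expFun n σ (genPt n σ)} :=
    convex_halfSpace_le (LinearMap.isLinear _) _
  have hsub : ↑(genFinset n) ⊆ {z : Fin (n+1) → ℝ | expFun n σ z ≤ expFun n σ (genPt n σ)} := by
    intro z hz
    simp only [genFinset, Finset.coe_image, Set.mem_image] at hz
    obtain ⟨τ, -, rfl⟩ := hz
    simp only [Set.mem_setOf_eq, expFun_apply]
    exact dot_le n σ τ
  exact convexHull_min hsub hconv hy

lemma face_eq_singleton (n : ℕ) (σ : Equiv.Perm (Fin (n + 1))) :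
    {x ∈ permutohedron n | ∀ y ∈ permutohedron n, expFun n σ y ≤ expFun n σ x} =
      {genPt n σ} := by
  have hmem : genPt n σ ∈ permutohedron n := by
    rw [permutohedron_eq]
    exact subset_convexHull ℝ _ (by simp [genFinset])
  apply Set.eq_singleton_iff_unique_mem.2
  refine ⟨⟨hmem, le_on_hull n σ⟩, ?_⟩
  rintro y ⟨hyQ, hymax⟩
  have hc : expFun n σ y = expFun n σ (genPt n σ) :=
    le_antisymm (le_on_hull n σ y hyQ) (hymax _ hmem)
  rw [permutohedron_eq, Finset.convexHull_eq] at hyQ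
  obtain ⟨w, hw0, hw1, hwy⟩ := hyQ
  rw [Finset.centerMass_eq_of_sum_1 _ _ hw1] at hwy
  set c := expFun n σ (genPt n σ) with hcdef
  have hterm : ∀ a ∈ genFinset n, w a * (c - expFun n σ a) = 0 := by
    apply (Finset.sum_eq_zero_iff_of_nonneg ?_).1 ?_
    · intro a ha
      have : expFun n σ a ≤ c := by
        apply le_on_hull n σ a
        rw [permutohedron_eq]; exact subset_convexHull ℝ _ ha
      have := hw0 a ha
      nlinarith
    · have hly : expFun n σ y = ∑ a ∈ genFinset n, w a * expFun n σ a := by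
        rw [← hwy]
        simp [map_sum, map_smul, smul_eq_mul]
      have : ∑ a ∈ genFinset n, w a * c = c := by
        rw [← Finset.sum_mul, hw1, one_mul]
      calc ∑ a ∈ genFinset n, w a * (c - expFun n σ a)
          = (∑ a ∈ genFinset n, w a * c) - ∑ a ∈ genFinset n, w a * expFun n σ a := by
            rw [← Finset.sum_sub_distrib]; exact Finset.sum_congr rfl fun a _ => by ring
        _ = c - expFun n σ y := by rw [this, ← hly]
        _ = 0 := by rw [hc]; ring
  have hwz : ∀ a ∈ genFinset n, a ≠ genPt n σ → w a = 0 := by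
    intro a ha hne
    obtain ⟨τ, -, rfl⟩ := Finset.mem_image.1 ha
    have hτ : τ ≠ σ := fun h => hne (by rw [h])
    have hlt : expFun n σ (genPt n τ) < c := by
      rcases lt_or_eq_of_le (dot_le n σ τ) with h | h
      · rw [expFun_apply, hcdef, expFun_apply]; exact h
      · exact absurd (dot_eq n σ τ h) hτ
    have := hterm _ ha
    rcases mul_eq_zero.1 this with h | h
    · exact h
    · exfalso
      have h2 : expFun n σ (genPt n τ) = c := by linarith
      rw [expFun_apply] at h2
      rw [expFun_apply] at hlt
      linarith
  have hgmem : genPt n σ ∈ genFinset n := by simp [genFinset]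
  have hw1' : w (genPt n σ) = 1 := by
    rw [← hw1]
    rw [Finset.sum_eq_single (genPt n σ)]
    · intro a ha hne; exact hwz a ha hne
    · intro h; exact absurd hgmem h
  rw [← hwy]
  rw [Finset.sum_eq_single (genPt n σ)]
  · simp [hw1']
  · intro a ha hne; rw [hwz a ha hne, zero_smul]
  · intro h; exact absurd hgmem h

lemma isVertex_genPt (n : ℕ) (σ : Equiv.Perm (Fin (n + 1))) :
    IsVertex (permutohedron n) (genPt n σ) := by
  refine ⟨{genPt n σ}, ⟨expFun n σ, (face_eq_singleton n σ).symm⟩, ?_, rfl⟩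
  unfold faceDim
  rw [direction_affineSpan, vectorSpan_singleton]
  exact finrank_bot ℝ _

lemma isVertex_mem (n : ℕ) (x : Fin (n+1) → ℝ) (hx : IsVertex (permutohedron n) x) :
    ∃ σ, x = genPt n σ := by
  obtain ⟨F, ⟨ℓ, hF⟩, hdim, hxF⟩ := hx
  have hFx : F ⊆ {x} := by
    intro y hyF
    have hdir : (affineSpan ℝ F).direction = ⊥ := by
      have : FiniteDimensional ℝ (affineSpan ℝ F).direction := inferInstance
      exact Submodule.finrank_eq_zero.1 hdim
    have hy : y ∈ affineSpan ℝ F := subset_affineSpan ℝ F hyF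
    have hx' : x ∈ affineSpan ℝ F := subset_affineSpan ℝ F hxF
    have := AffineSubspace.vsub_mem_direction hy hx'
    rw [hdir] at this
    have : y - x = 0 := by simpa using this
    simp [sub_eq_zero.1 this]
  obtain ⟨a, ha, hamax⟩ :=
    Finset.exists_max_image (genFinset n) ℓ ⟨genPt n 1, by simp [genFinset]⟩
  have haQ : a ∈ permutohedron n := by
    rw [permutohedron_eq]; exact subset_convexHull ℝ _ ha
  have hamax' : ∀ y ∈ permutohedron n, ℓ y ≤ ℓ a := by
    intro y hy
    rw [permutohedron_eq] at hy
    have hconv : Convex ℝ {z : Fin (n+1) → ℝ | ℓ z ≤ ℓ a} :=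
      convex_halfSpace_le (LinearMap.isLinear _) _
    exact convexHull_min (fun z hz => hamax z hz) hconv hy
  have haF : a ∈ F := by rw [hF]; exact ⟨haQ, hamax'⟩
  have : a = x := hFx haF
  obtain ⟨τ, -, rfl⟩ := Finset.mem_image.1 ha
  exact ⟨τ, this.symm⟩

/-! ### Arithmetic: minimal sums of distinct positive integers -/

lemma gauss (k : ℕ) : 2 * ∑ j ∈ Finset.Icc 1 k, j = k * (k + 1) := by
  induction k with
  | zero => simp
  | succ k ih =>
    rw [Finset.sum_Icc_succ_top (by omega : 1 ≤ k + 1), Nat.mul_add, ih]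
    ring

lemma min_sum_aux (k : ℕ) : ∀ U : Finset ℕ, 0 ∉ U → U.card = k →
    k * (k + 1) ≤ 2 * ∑ j ∈ U, j ∧
      (2 * ∑ j ∈ U, j = k * (k + 1) → U = Finset.Icc 1 k) := by
  induction k with
  | zero =>
    intro U _ hc
    rw [Finset.card_eq_zero] at hc
    subst hc; simp
  | succ k ih =>
    intro U h0 hc
    have hne : U.Nonempty := Finset.card_pos.1 (by omega)
    set M := U.max' hne with hM
    have hMem : M ∈ U := U.max'_mem hne
    have hsub : U ⊆ Finset.Icc 1 M := by
      intro a ha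
      refine Finset.mem_Icc.2 ⟨?_, U.le_max' a ha⟩
      rcases Nat.eq_zero_or_pos a with h | h
      · exact absurd (h ▸ ha) h0
      · exact h
    have hMk : k + 1 ≤ M := by
      have := Finset.card_le_card hsub
      rwa [hc, Nat.card_Icc, Nat.add_sub_cancel] at this
    have hcard : (U.erase M).card = k := by rw [Finset.card_erase_of_mem hMem, hc]; omega
    have h0' : 0 ∉ U.erase M := fun h => h0 (Finset.mem_of_mem_erase h)
    obtain ⟨ihle, iheq⟩ := ih (U.erase M) h0' hcard
    have hsum : ∑ j ∈ U, j = M + ∑ j ∈ U.erase M, j := (Finset.add_sum_erase U id hMem).symm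
    constructor
    · rw [hsum]; nlinarith
    · intro heq
      rw [hsum] at heq
      have hM1 : M = k + 1 := by nlinarith
      have hE : U.erase M = Finset.Icc 1 k := iheq (by nlinarith)
      have : U = insert M (U.erase M) := (Finset.insert_erase hMem).symm
      rw [this, hE, hM1]
      ext a
      simp [Finset.mem_Icc, Finset.mem_insert]
      omega

/-! ### Bridge between the real conditions and natural-number finsets -/

def natPt (n : ℕ) (σ : Equiv.Perm (Fin (n + 1))) : Fin (n + 1) → ℕ :=
  fun i => ((σ⁻¹ i : Fin (n+1)) : ℕ) + 1

lemma genPt_eq_cast (n : ℕ) (σ : Equiv.Perm (Fin (n+1))) :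
    genPt n σ = fun i => ((natPt n σ i : ℕ) : ℝ) := by
  funext i; simp [genPt, permAct, basePt, natPt]

lemma natPt_inj (n : ℕ) (σ : Equiv.Perm (Fin (n+1))) : Function.Injective (natPt n σ) := by
  intro i j h
  have : σ⁻¹ i = σ⁻¹ j := Fin.ext (by simpa [natPt] using h)
  simpa using congrArg σ this

lemma zero_not_mem (n : ℕ) (σ : Equiv.Perm (Fin (n+1))) (S : Finset (Fin (n+1))) :
    0 ∉ S.image (natPt n σ) := by
  simp [natPt]

lemma card_image_natPt (n : ℕ) (σ : Equiv.Perm (Fin (n+1))) (S : Finset (Fin (n+1))) :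
    (S.image (natPt n σ)).card = S.card :=
  Finset.card_image_of_injective _ (natPt_inj n σ)

lemma sum_cond_iff (n : ℕ) (σ : Equiv.Perm (Fin (n+1))) (S : Finset (Fin (n+1))) :
    (∑ i ∈ S, genPt n σ i = (S.card : ℝ) * (S.card + 1) / 2) ↔
      S.image (natPt n σ) = Finset.Icc 1 S.card := by
  set k := S.card
  have hsum : ∑ i ∈ S, genPt n σ i = ((∑ j ∈ S.image (natPt n σ), j : ℕ) : ℝ) := by
    rw [Finset.sum_image (fun a _ b _ h => natPt_inj n σ h)]
    push_cast
    refine Finset.sum_congr rfl fun i _ => ?_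
    simp [genPt, permAct, basePt, natPt]
  rw [hsum]
  constructor
  · intro h
    have h2 : (2 * ∑ j ∈ S.image (natPt n σ), j : ℕ) = k * (k + 1) := by
      have h3 : ((2 * ∑ j ∈ S.image (natPt n σ), j : ℕ) : ℝ) = ((k * (k+1) : ℕ) : ℝ) := by
        push_cast at h ⊢
        linarith
      exact_mod_cast h3
    exact (min_sum_aux k _ (zero_not_mem n σ S) (card_image_natPt n σ S)).2 h2
  · intro h
    rw [h]
    have hg := gauss k
    have hgR : ((2 * ∑ j ∈ Finset.Icc 1 k, j : ℕ) : ℝ) = ((k * (k+1) : ℕ):ℝ) :=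
      congrArg (Nat.cast : ℕ → ℝ) hg
    push_cast at hgR ⊢
    linarith

lemma image_cond_iff (n : ℕ) (σ : Equiv.Perm (Fin (n+1))) (S : Finset (Fin (n+1))) :
    (genPt n σ '' (S : Set (Fin (n+1))) = (fun k : ℕ => (k : ℝ)) '' Set.Icc 1 S.card) ↔
      S.image (natPt n σ) = Finset.Icc 1 S.card := by
  rw [genPt_eq_cast]
  have h1 : (fun i => ((natPt n σ i : ℕ) : ℝ)) '' (S : Set (Fin (n+1))) =
      (fun k : ℕ => (k : ℝ)) '' ((natPt n σ) '' (S : Set (Fin (n+1)))) := by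
    rw [← Set.image_comp]; rfl
  rw [h1]
  rw [show (Set.Icc 1 S.card : Set ℕ) = ↑(Finset.Icc 1 S.card) by rw [Finset.coe_Icc]]
  rw [show (natPt n σ) '' (S : Set (Fin (n+1))) = ↑(S.image (natPt n σ)) by
    rw [Finset.coe_image]]
  constructor
  · intro h
    have hinj : Function.Injective (Set.image (fun k : ℕ => (k:ℝ))) :=
      Set.image_injective.2 Nat.cast_injective
    exact Finset.coe_injective (hinj h)
  · intro h; rw [h]

/-! ### Counting -/

def permCondEquiv {α : Type*} [DecidableEq α] (p q : α → Prop) [DecidablePred p]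
    [DecidablePred q] :
    {σ : Equiv.Perm α // ∀ i, p i ↔ q (σ i)} ≃
      (({i // p i} ≃ {i // q i}) × ({i // ¬ p i} ≃ {i // ¬ q i})) where
  toFun := fun ⟨σ, hσ⟩ =>
    (Equiv.subtypeEquiv σ hσ, Equiv.subtypeEquiv σ (fun i => not_congr (hσ i)))
  invFun := fun ⟨e, f⟩ =>
    ⟨(Equiv.sumCompl p).symm.trans ((e.sumCongr f).trans (Equiv.sumCompl q)), by
      intro i
      by_cases hi : p i
      · simp [Equiv.sumCompl_symm_apply_of_pos hi, (e ⟨i, hi⟩).2, hi]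
      · simp [Equiv.sumCompl_symm_apply_of_neg hi, (f ⟨i, hi⟩).2, hi]⟩
  left_inv := by
    rintro ⟨σ, hσ⟩
    ext i
    by_cases hi : p i
    · simp [Equiv.sumCompl_symm_apply_of_pos hi]
    · simp [Equiv.sumCompl_symm_apply_of_neg hi]
  right_inv := by
    rintro ⟨e, f⟩
    refine Prod.ext ?_ ?_ <;> simp only []
    · ext ⟨i, hi⟩
      simp [Equiv.sumCompl_symm_apply_of_pos hi]
    · ext ⟨i, hi⟩
      simp [Equiv.sumCompl_symm_apply_of_neg hi]

lemma Q_iff (n : ℕ) (σ : Equiv.Perm (Fin (n+1))) (S : Finset (Fin (n+1))) :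
    S.image (natPt n σ) = Finset.Icc 1 S.card ↔
      ∀ i, i ∈ S ↔ ((σ⁻¹ i : Fin (n+1)) : ℕ) < S.card := by
  set k := S.card with hk
  have hkle : k ≤ n + 1 := by
    rw [hk]; simpa using Finset.card_le_univ S
  constructor
  · intro h i
    constructor
    · intro hi
      have : natPt n σ i ∈ Finset.Icc 1 k := h ▸ Finset.mem_image_of_mem _ hi
      have := (Finset.mem_Icc.1 this).2
      simp only [natPt] at this
      omega
    · intro hlt
      have : natPt n σ i ∈ Finset.Icc 1 k :=
        Finset.mem_Icc.2 ⟨by simp [natPt], by simp [natPt]; omega⟩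
      rw [← h] at this
      obtain ⟨j, hj, hji⟩ := Finset.mem_image.1 this
      rwa [← natPt_inj n σ hji]
  · intro h
    ext m
    simp only [Finset.mem_image, Finset.mem_Icc]
    constructor
    · rintro ⟨i, hi, rfl⟩
      have := (h i).1 hi
      simp only [natPt]
      omega
    · rintro ⟨h1, h2⟩
      obtain ⟨j, rfl⟩ := Nat.exists_eq_succ_of_ne_zero (by omega : m ≠ 0)
      have hjn : j < n + 1 := by omega
      refine ⟨σ ⟨j, hjn⟩, ?_, ?_⟩
      · apply (h _).2
        simp
        omega
      · simp [natPt]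

lemma card_lt_subtype (n k : ℕ) (hk : k ≤ n + 1) :
    Fintype.card {j : Fin (n+1) // (j : ℕ) < k} = k := by
  have e : {j : Fin (n+1) // (j : ℕ) < k} ≃ Fin k :=
    { toFun := fun x => ⟨x.1.val, x.2⟩
      invFun := fun a => ⟨⟨a.val, lt_of_lt_of_le a.2 hk⟩, a.2⟩
      left_inv := fun x => by ext; rfl
      right_inv := fun a => rfl }
  rw [Fintype.card_congr e, Fintype.card_fin]

lemma count_perms (n : ℕ) (S : Finset (Fin (n+1))) :
    Fintype.card {σ : Equiv.Perm (Fin (n+1)) // S.image (natPt n σ) = Finset.Icc 1 S.card} =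
      Nat.factorial S.card * Nat.factorial (n + 1 - S.card) := by
  set k := S.card with hk
  have hkle : k ≤ n + 1 := by rw [hk]; simpa using Finset.card_le_univ S
  have e1 : {σ : Equiv.Perm (Fin (n+1)) // S.image (natPt n σ) = Finset.Icc 1 k} ≃
      {σ : Equiv.Perm (Fin (n+1)) // ∀ i, i ∈ S ↔ ((σ⁻¹ i : Fin (n+1)) : ℕ) < k} :=
    Equiv.subtypeEquivRight (fun σ => Q_iff n σ S)
  have e2 : {σ : Equiv.Perm (Fin (n+1)) // ∀ i, i ∈ S ↔ ((σ⁻¹ i : Fin (n+1)) : ℕ) < k} ≃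
      {τ : Equiv.Perm (Fin (n+1)) // ∀ i, i ∈ S ↔ ((τ i : Fin (n+1)) : ℕ) < k} :=
    Equiv.subtypeEquiv (Equiv.inv (Equiv.Perm (Fin (n+1)))) (fun σ => by simp)
  have e3 := permCondEquiv (fun i : Fin (n+1) => i ∈ S) (fun j : Fin (n+1) => (j : ℕ) < k)
  have hcardS : Fintype.card {i : Fin (n+1) // i ∈ S} = k := by
    rw [hk]; exact Fintype.card_coe S
  have hcardT : Fintype.card {j : Fin (n+1) // (j : ℕ) < k} = k := card_lt_subtype n k hkle
  have hcardSc : Fintype.card {i : Fin (n+1) // ¬ i ∈ S} = n + 1 - k := by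
    rw [Fintype.card_subtype_compl, hcardS, Fintype.card_fin]
  have hcardTc : Fintype.card {j : Fin (n+1) // ¬ (j : ℕ) < k} = n + 1 - k := by
    rw [Fintype.card_subtype_compl, hcardT, Fintype.card_fin]
  rw [Fintype.card_congr ((e1.trans e2).trans e3), Fintype.card_prod,
    Fintype.card_equiv (Fintype.equivOfCardEq (hcardS.trans hcardT.symm)),
    Fintype.card_equiv (Fintype.equivOfCardEq (hcardSc.trans hcardTc.symm)),
    hcardS, hcardSc]

/-! ### Main theorem -/

/-- The vertices of `P_n` lying in `F_S` are exactly the points `σ·v`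
whose coordinates at the positions in `S` form the set `{1,…,|S|}`; consequently `F_S`
contains exactly `|S|!·(n+1−|S|)!` vertices of `P_n`. -/
theorem statement3 (n : ℕ) (hn : 1 ≤ n) (S : Finset (Fin (n + 1)))
    (hS : S.Nonempty) (hS' : S ≠ Finset.univ) :
    {x | IsVertex (permutohedron n) x ∧ x ∈ faceOfSubset n S} =
      {x : Fin (n + 1) → ℝ | (∃ σ : Equiv.Perm (Fin (n + 1)), x = permAct n σ (basePt n)) ∧
        x '' (S : Set (Fin (n + 1))) = (fun k : ℕ => (k : ℝ)) '' Set.Icc 1 S.card} ∧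
    {x | IsVertex (permutohedron n) x ∧ x ∈ faceOfSubset n S}.ncard =
      Nat.factorial S.card * Nat.factorial (n + 1 - S.card) := by
  have hset : {x | IsVertex (permutohedron n) x ∧ x ∈ faceOfSubset n S} =
      {x : Fin (n + 1) → ℝ | (∃ σ : Equiv.Perm (Fin (n + 1)), x = permAct n σ (basePt n)) ∧
        x '' (S : Set (Fin (n + 1))) = (fun k : ℕ => (k : ℝ)) '' Set.Icc 1 S.card} := by
    ext x
    simp only [Set.mem_setOf_eq]
    constructor
    · rintro ⟨hv, hxQ, hsum⟩
      obtain ⟨σ, rfl⟩ := isVertex_mem n x hv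
      exact ⟨⟨σ, rfl⟩, (image_cond_iff n σ S).2 ((sum_cond_iff n σ S).1 hsum)⟩
    · rintro ⟨⟨σ, rfl⟩, himg⟩
      refine ⟨isVertex_genPt n σ, ?_, (sum_cond_iff n σ S).2 ((image_cond_iff n σ S).1 himg)⟩
      rw [permutohedron_eq]
      exact subset_convexHull ℝ _
        (Finset.mem_coe.2 (Finset.mem_image.2 ⟨σ, Finset.mem_univ σ, rfl⟩))
  refine ⟨hset, ?_⟩
  rw [hset]
  have himage : {x : Fin (n + 1) → ℝ |
        (∃ σ : Equiv.Perm (Fin (n + 1)), x = permAct n σ (basePt n)) ∧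
        x '' (S : Set (Fin (n + 1))) = (fun k : ℕ => (k : ℝ)) '' Set.Icc 1 S.card} =
      genPt n '' {σ | S.image (natPt n σ) = Finset.Icc 1 S.card} := by
    ext x
    simp only [Set.mem_setOf_eq, Set.mem_image]
    constructor
    · rintro ⟨⟨σ, rfl⟩, himg⟩
      refine ⟨σ, ?_, rfl⟩
      exact (image_cond_iff n σ S).1 himg
    · rintro ⟨σ, hσ, rfl⟩
      exact ⟨⟨σ, rfl⟩, (image_cond_iff n σ S).2 hσ⟩
  rw [himage, Set.ncard_image_of_injective _ (genPt_inj n)]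
  rw [← Nat.card_coe_set_eq, Nat.card_eq_fintype_card]
  rw [← count_perms n S]
  congr 1

end
end

section
/- For t ∈ ℂ∖{0}, the fiber {z ∈ (ℂ∖{0})^n : f_t(z) = 0} has a singular point if and only if t^{n+2} = (−(n+1))^{n+1}; and in that case the singular point is unique, namely z_1 = ⋯ = z_n = −t/(n+1). In particular, the projection from Y_n to ℂ∖{0} given by z ↦ z_{n+1} has exactly n+2 critical values, the n+2 complex solutions t of t^{n+2} = (−(n+1))^{n+1}. -/
noncomputable section

/-- `f_t(z) = z_1 + ⋯ + z_n + t + (t·z_1⋯z_n)⁻¹`, whose zero locus in `(ℂ∖{0})^n` is the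
fiber over `t` of the projection `z ↦ z_{n+1}` from `Y_n`. -/
def fib (n : ℕ) (t : ℂ) (z : Fin n → ℂ) : ℂ :=
  (∑ i, z i) + t + (t * ∏ i, z i)⁻¹

/-- `z` is a singular point of the fiber over `t`: `z ∈ (ℂ∖{0})^n`, `f_t(z) = 0`, and all
partial derivatives `∂f_t/∂z_i` vanish at `z`. -/
def IsSingPt (n : ℕ) (t : ℂ) (z : Fin n → ℂ) : Prop :=
  (∀ i, z i ≠ 0) ∧ fib n t z = 0 ∧
    ∀ i, deriv (fun w => fib n t (Function.update z i w)) (z i) = 0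

open Finset in
lemma fib_update (n : ℕ) (t : ℂ) (z : Fin n → ℂ) (i : Fin n) (w : ℂ) :
    fib n t (Function.update z i w)
      = w + ((∑ j ∈ univ.erase i, z j) + t) + (t * ∏ j ∈ univ.erase i, z j)⁻¹ * w⁻¹ := by
  unfold fib
  rw [Finset.sum_update_of_mem (mem_univ i), Finset.prod_update_of_mem (mem_univ i),
    mul_inv, mul_inv, mul_inv]
  simp only [Finset.sdiff_singleton_eq_erase]
  ring

open Finset in
lemma deriv_fib (n : ℕ) (t : ℂ) (z : Fin n → ℂ) (i : Fin n) (hzi : z i ≠ 0) :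
    deriv (fun w => fib n t (Function.update z i w)) (z i)
      = 1 + (t * ∏ j ∈ univ.erase i, z j)⁻¹ * (-(z i ^ 2)⁻¹) := by
  have h1 : HasDerivAt (fun w : ℂ => w + ((∑ j ∈ univ.erase i, z j) + t)
      + (t * ∏ j ∈ univ.erase i, z j)⁻¹ * w⁻¹)
      (1 + (t * ∏ j ∈ univ.erase i, z j)⁻¹ * (-(z i ^ 2)⁻¹)) (z i) :=
    ((hasDerivAt_id (z i)).add_const _).add ((hasDerivAt_inv hzi).const_mul _)
  have h2 : HasDerivAt (fun w => fib n t (Function.update z i w))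
      (1 + (t * ∏ j ∈ univ.erase i, z j)⁻¹ * (-(z i ^ 2)⁻¹)) (z i) :=
    h1.congr_of_eventuallyEq (Filter.Eventually.of_forall fun w => fib_update n t z i w)
  exact h2.deriv

open Finset in
lemma deriv_fib_eq_zero_iff (n : ℕ) (t : ℂ) (z : Fin n → ℂ) (i : Fin n)
    (hz : ∀ j, z j ≠ 0) :
    deriv (fun w => fib n t (Function.update z i w)) (z i) = 0 ↔
      t * (∏ j, z j) * z i = 1 := by
  rw [deriv_fib n t z i (hz i)]
  have hP : z i * ∏ j ∈ univ.erase i, z j = ∏ j, z j :=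
    Finset.mul_prod_erase univ z (mem_univ i)
  have e1 : 1 + (t * ∏ j ∈ univ.erase i, z j)⁻¹ * (-(z i ^ 2)⁻¹)
      = 1 - (t * (∏ j, z j) * z i)⁻¹ := by
    rw [← hP, mul_inv, mul_inv, mul_inv, mul_inv]
    ring
  rw [e1, sub_eq_zero, eq_comm, inv_eq_one]

/-- Key characterization: for `t ≠ 0`, `z` is a singular point iff `z` is the constant
`-t/(n+1)` and `t^(n+2) = (-(n+1))^(n+1)`. -/
lemma sing_iff (n : ℕ) (hn : 1 ≤ n) (t : ℂ) (ht : t ≠ 0) (z : Fin n → ℂ) :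
    IsSingPt n t z ↔
      z = (fun _ => -t / ((n : ℂ) + 1)) ∧ t ^ (n + 2) = (-((n : ℂ) + 1)) ^ (n + 1) := by
  have hN : ((n : ℂ) + 1) ≠ 0 := Nat.cast_add_one_ne_zero n
  have hcne : -t / ((n : ℂ) + 1) ≠ 0 := div_ne_zero (neg_ne_zero.2 ht) hN
  constructor
  · rintro ⟨hz, hf, hd⟩
    have key : ∀ i, t * (∏ j, z j) * z i = 1 := fun i =>
      (deriv_fib_eq_zero_iff n t z i hz).mp (hd i)
    set i0 : Fin n := ⟨0, hn⟩ with hi0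
    set c0 : ℂ := z i0 with hc0
    have hzz : ∀ i, z i = c0 := by
      intro i
      rw [← inv_eq_of_mul_eq_one_right (key i), hc0, ← inv_eq_of_mul_eq_one_right (key i0)]
    have hprod : (∏ j, z j) = c0 ^ n := by
      rw [Finset.prod_congr rfl fun j _ => hzz j, Finset.prod_const, Finset.card_univ,
        Fintype.card_fin]
    have hsum : (∑ j, z j) = (n : ℂ) * c0 := by
      rw [Finset.sum_congr rfl fun j _ => hzz j, Finset.sum_const, Finset.card_univ,
        Fintype.card_fin, nsmul_eq_mul]
    have hkey : t * c0 ^ (n + 1) = 1 := by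
      have := key i0
      rw [hprod] at this
      rw [pow_succ, ← mul_assoc]
      exact this
    have hc0ne : c0 ≠ 0 := hz i0
    have hinv : (t * c0 ^ n)⁻¹ = c0 :=
      inv_eq_of_mul_eq_one_right (by rw [mul_assoc, ← pow_succ]; exact hkey)
    have hEq : (n : ℂ) * c0 + t + c0 = 0 := by
      have := hf
      rw [fib, hsum, hprod, hinv] at this
      exact this
    have hc0eq : c0 = -t / ((n : ℂ) + 1) := by
      field_simp
      linear_combination hEq
    have hpow : c0 ^ (n + 1) = t⁻¹ := (inv_eq_of_mul_eq_one_right hkey).symm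
    have h5 : -((n : ℂ) + 1) = t / c0 := by
      field_simp
      linear_combination -hEq
    refine ⟨funext fun i => by rw [hzz i, hc0eq], ?_⟩
    calc t ^ (n + 2) = t ^ (n + 1) * t := pow_succ t (n + 1)
      _ = t ^ (n + 1) / c0 ^ (n + 1) := by rw [hpow, div_eq_mul_inv, inv_inv]
      _ = (t / c0) ^ (n + 1) := (div_pow t c0 (n + 1)).symm
      _ = (-((n : ℂ) + 1)) ^ (n + 1) := by rw [← h5]
  · rintro ⟨rfl, hT⟩
    set c : ℂ := -t / ((n : ℂ) + 1) with hc
    have hkey : t * c ^ (n + 1) = 1 := by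
      have hc' : c = t / (-((n : ℂ) + 1)) := by rw [hc, div_neg, neg_div]
      rw [hc', div_pow, ← hT, pow_succ]
      field_simp
      ring
    have hprod : (∏ _j : Fin n, c) = c ^ n := by
      rw [Finset.prod_const, Finset.card_univ, Fintype.card_fin]
    refine ⟨fun _ => hcne, ?_, fun i => ?_⟩
    · rw [fib, Finset.sum_const, Finset.card_univ, Fintype.card_fin, nsmul_eq_mul, hprod,
        inv_eq_of_mul_eq_one_right (by rw [mul_assoc, ← pow_succ]; exact hkey)]
      rw [hc]
      field_simp
      ring
    · rw [deriv_fib_eq_zero_iff n t _ i (fun _ => hcne)]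
      show t * (∏ _j : Fin n, c) * c = 1
      rw [hprod, mul_assoc, ← pow_succ]
      exact hkey

/-- For `t ≠ 0`, the fiber has a singular point iff
`t^{n+2} = (−(n+1))^{n+1}`, in which case the singular point is unique, namely
`z_1 = ⋯ = z_n = −t/(n+1)`. In particular the projection `z ↦ z_{n+1}` from `Y_n` has
exactly `n+2` critical values, the `n+2` complex solutions of `t^{n+2} = (−(n+1))^{n+1}`. -/
theorem statement19 (n : ℕ) (hn : 1 ≤ n) :
    (∀ t : ℂ, t ≠ 0 →
      ((∃ z, IsSingPt n t z) ↔ t ^ (n + 2) = (-((n : ℂ) + 1)) ^ (n + 1)) ∧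
      (∀ z, IsSingPt n t z → z = fun _ => -t / ((n : ℂ) + 1))) ∧
    {t : ℂ | t ≠ 0 ∧ ∃ z, IsSingPt n t z} =
      {t : ℂ | t ^ (n + 2) = (-((n : ℂ) + 1)) ^ (n + 1)} ∧
    {t : ℂ | t ≠ 0 ∧ ∃ z, IsSingPt n t z}.ncard = n + 2 := by
  have hN : ((n : ℂ) + 1) ≠ 0 := Nat.cast_add_one_ne_zero n
  have hA : (-((n : ℂ) + 1)) ^ (n + 1) ≠ 0 := pow_ne_zero _ (neg_ne_zero.2 hN)
  have hsets : {t : ℂ | t ≠ 0 ∧ ∃ z, IsSingPt n t z} =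
      {t : ℂ | t ^ (n + 2) = (-((n : ℂ) + 1)) ^ (n + 1)} := by
    ext t
    simp only [Set.mem_setOf_eq]
    constructor
    · rintro ⟨ht, z, hz⟩
      exact ((sing_iff n hn t ht z).1 hz).2
    · intro h
      have ht : t ≠ 0 := by
        intro h0
        rw [h0, zero_pow (by omega : n + 2 ≠ 0)] at h
        exact hA h.symm
      exact ⟨ht, ⟨fun _ => -t / ((n : ℂ) + 1), (sing_iff n hn t ht _).2 ⟨rfl, h⟩⟩⟩
  refine ⟨fun t ht => ⟨⟨?_, ?_⟩, fun z hz => ((sing_iff n hn t ht z).1 hz).1⟩, hsets, ?_⟩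
  · rintro ⟨z, hz⟩
    exact ((sing_iff n hn t ht z).1 hz).2
  · intro h
    exact ⟨fun _ => -t / ((n : ℂ) + 1), (sing_iff n hn t ht _).2 ⟨rfl, h⟩⟩
  · rw [hsets]
    have hfin : {t : ℂ | t ^ (n + 2) = (-((n : ℂ) + 1)) ^ (n + 1)} =
        ↑(Polynomial.nthRoots (n + 2) ((-((n : ℂ) + 1)) ^ (n + 1))).toFinset := by
      ext t
      simp [Polynomial.mem_nthRoots (by omega : 0 < n + 2)]
    have hζ := Complex.isPrimitiveRoot_exp (n + 2) (by omega)
    rw [hfin, Set.ncard_coe_finset,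
      Multiset.toFinset_card_of_nodup (hζ.nthRoots_nodup hA), hζ.card_nthRoots,
      if_pos (IsAlgClosed.exists_pow_nat_eq _ (by omega : 0 < n + 2))]

end
end
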